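/- arXiv:2510.22416 — 8 statements merged into one kernel-verified Lean document; each statement's English description precedes it below -/
import Mathlib

section
/- Deterministic core of Theorem 2.1: Let K : (0,∞) → ℝ be continuous and locally square-integrable on [0,∞), let b₀, β, λ ∈ ℝ, and let D ⊆ ℝ be a nonempty set. Let E : (0,∞) → ℝ be continuous and locally square-integrable, satisfying the linear Volterra equation E(t) = K(t) + β ∫₀ᵗ K(t−s) E(s) ds for all t > 0, and define E₁(T) := 1 + β ∫₀ᵀ e^{λs} E(s) ds for T ≥ 0. Assume that for all x ∈ D and all 0 < t < T one has e^{−λT} E₁(T) x + b₀ ∫₀ᵀ E(s) ds = e^{−λT} E₁(T−t) E₁(t) x + b₀ e^{−λ(T−t)} E₁(T−t) ∫₀ᵗ E(s) ds + b₀ ∫₀^{T−t} E(s) ds. Assume moreover: (b₀ ≠ 0 or β ≠ 0); if b₀ = 0 and β ≠ 0 then D contains a nonzero element; if b₀ ≠ 0, β ≠ 0 and λ = 0 then 0 ∈ D; if b₀ ≠ 0, β ≠ 0 and λ ≠ 0 then −b₀/β ∈ D. Then there exists c ∈ ℝ such that K(t) = c e^{−λt} for all t > 0. -/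
/-!
Write `F t = e^{-λt} E₁(t)` and `G t = ∫₀ᵗ E`. Taking `T = s + t`, the identity says that
`ψ = x (F - 1) + b₀ G` satisfies `ψ (s + t) = F s * ψ t + ψ s` on `(0, ∞)`. Exchanging `s` and `t`
shows that `ψ` is a multiple of `F - 1`, so either `F` is multiplicative or `ψ ≡ 0`, and the
admissible choices of `x ∈ D` make `ψ ≡ 0` degenerate (`F ≡ 1`, `F ≡ 0` or `E ≡ 0`). A
multiplicative `F` with `F' = -λF + βE` and `F 0 = 1` is `e^{μt}`, hence `E = c e^{μt}` with
`βc = μ + λ`; for `β = 0` one differentiates the cocycle identity instead and gets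
`E (s + t) = e^{-λs} E t`. Once `E = c e^{μt}`, the Volterra equation turns into the linear ODE
`P' = c (1 - βP)` for `P t = ∫₀ᵗ K(u) e^{-μu} du`, whence `K = c e^{-λt}`.
-/

open MeasureTheory Set Filter intervalIntegral Real Topology

lemma intervalIntegrable_of_integrableOn_sq {f : ℝ → ℝ} {T : ℝ} (hf : ContinuousOn f (Ioi 0))
    (h : IntegrableOn (fun s => f s ^ 2) (Ioc 0 T)) (hT : 0 ≤ T) :
    IntervalIntegrable f volume 0 T := by
  rw [intervalIntegrable_iff_integrableOn_Ioc_of_le hT]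
  have hm : AEStronglyMeasurable f (volume.restrict (Ioc 0 T)) :=
    (hf.mono Ioc_subset_Ioi_self).aestronglyMeasurable measurableSet_Ioc
  have : IsFiniteMeasure (volume.restrict (Ioc (0 : ℝ) T)) :=
    isFiniteMeasure_restrict.2 measure_Ioc_lt_top.ne
  exact ((memLp_two_iff_integrable_sq hm).2 h).integrable one_le_two

lemma hasDerivAt_integral_of_continuousOn {f : ℝ → ℝ} {U : Set ℝ} {a t : ℝ}
    (hf : ContinuousOn f U) (hU : IsOpen U) (ht : t ∈ U) (hi : IntervalIntegrable f volume a t) :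
    HasDerivAt (fun u => ∫ s in a..u, f s) (f t) t :=
  integral_hasDerivAt_right hi (hf.stronglyMeasurableAtFilter hU t ht)
    (hf.continuousAt (hU.mem_nhds ht))

lemma eq_of_hasDerivAt_zero {W : ℝ → ℝ} {a b : ℝ} (hab : a ≤ b) (hc : ContinuousOn W (Icc a b))
    (hd : ∀ s ∈ Ioo a b, HasDerivAt W 0 s) : W b = W a := by
  rcases hab.eq_or_lt with rfl | hlt
  · rfl
  obtain ⟨c, -, hslope⟩ := exists_hasDerivAt_eq_slope W (fun _ => 0) hlt hc hd
  rw [eq_comm, div_eq_zero_iff, sub_eq_zero] at hslope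
  exact hslope.resolve_right (sub_ne_zero.2 hlt.ne')

lemma eq_mul_exp_of_hasDerivAt {F : ℝ → ℝ} {μ a b : ℝ} (hab : a ≤ b)
    (hc : ContinuousOn F (Icc a b)) (hd : ∀ s ∈ Ioo a b, HasDerivAt F (μ * F s) s) :
    F b = F a * exp (μ * (b - a)) := by
  have hW : F b * exp (-μ * b) = F a * exp (-μ * a) := by
    refine eq_of_hasDerivAt_zero (W := fun s => F s * exp (-μ * s)) hab
      (hc.mul (by fun_prop)) fun s hs => ?_
    refine ((hd s hs).mul ((hasDerivAt_id s).const_mul (-μ)).exp).congr_deriv ?_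
    simp only [id]
    ring
  calc F b = F b * exp (-μ * b) * exp (μ * b) := by rw [mul_assoc, ← exp_add]; simp
    _ = F a * exp (μ * (b - a)) := by rw [hW, mul_assoc, ← exp_add]; ring_nf

/-- When `F` is multiplicative, this says that the affine maps `y ↦ F t * y + ψ t` form a
semigroup. -/
def IsCocycle (F ψ : ℝ → ℝ) : Prop :=
  ∀ s > 0, ∀ t > 0, ψ (s + t) = F s * ψ t + ψ s

namespace IsCocycle

variable {F ψ : ℝ → ℝ}

lemma of_mul (hmul : ∀ s > 0, ∀ t > 0, F (s + t) = F s * F t) :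
    IsCocycle F fun t => F t - 1 := fun s hs t ht => by
  show F (s + t) - 1 = _
  rw [hmul s hs t ht]
  ring

lemma mul_or_eq_zero (h : IsCocycle F ψ) :
    (∀ s > 0, ∀ t > 0, F (s + t) = F s * F t) ∨ ∀ t > 0, ψ t = 0 := by
  by_cases hF : ∀ t > 0, F t = 1
  · left
    intro s hs t ht
    rw [hF _ (add_pos hs ht), hF s hs, hF t ht, one_mul]
  push Not at hF
  obtain ⟨s₀, hs₀, hFs₀⟩ := hF
  have hne : F s₀ - 1 ≠ 0 := sub_ne_zero.2 hFs₀
  set c := ψ s₀ / (F s₀ - 1)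
  have hψ : ∀ t > 0, ψ t = c * (F t - 1) := fun t ht => by
    have hst := h s₀ hs₀ t ht
    rw [add_comm] at hst
    rw [div_mul_eq_mul_div, eq_div_iff hne]
    linear_combination h t ht s₀ hs₀ - hst
  rcases eq_or_ne c 0 with hc | hc
  · right
    intro t ht
    rw [hψ t ht, hc, zero_mul]
  · left
    intro s hs t ht
    have hst := h s hs t ht
    rw [hψ _ (add_pos hs ht), hψ s hs, hψ t ht] at hst
    exact mul_left_cancel₀ hc (by linear_combination hst)

lemma deriv_add_eq_mul {ψ' : ℝ → ℝ} (h : IsCocycle F ψ) (hd : ∀ t > 0, HasDerivAt ψ (ψ' t) t) :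
    ∀ s > 0, ∀ t > 0, ψ' (s + t) = F s * ψ' t := fun s hs t ht => by
  have hshift : HasDerivAt (fun u => ψ (s + u)) (ψ' (s + t)) t :=
    (hd (s + t) (add_pos hs ht)).comp_const_add s t
  have hrhs : HasDerivAt (fun u => F s * ψ u + ψ s) (F s * ψ' t) t :=
    ((hd t ht).const_mul _).add_const _
  refine hshift.unique (hrhs.congr_of_eventuallyEq ?_)
  filter_upwards [Ioi_mem_nhds ht] with u hu
  exact h s hs u hu

end IsCocycle

lemma eq_div_mul_of_add_eq_mul {F g : ℝ → ℝ} (h : ∀ s > 0, ∀ t > 0, g (s + t) = F s * g t)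
    (hF : F 1 ≠ 0) : ∀ t > 0, g t = g 1 / F 1 * F t := fun t ht => by
  have h₁ := h 1 one_pos t ht
  rw [add_comm, h t ht 1 one_pos] at h₁
  field_simp
  linear_combination -h₁

lemma exists_eq_exp_of_mul {F F' : ℝ → ℝ} (hmul : ∀ s > 0, ∀ t > 0, F (s + t) = F s * F t)
    (hd : ∀ t > 0, HasDerivAt F (F' t) t) (hc : ∀ T > 0, ContinuousOn F (Icc 0 T))
    (h0 : F 0 = 1) : ∃ μ, ∀ t > 0, F t = exp (μ * t) := by
  obtain ⟨t₀, ht₀, hFt₀⟩ : ∃ t₀ > 0, F t₀ ≠ 0 := by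
    have hlim : Tendsto F (𝓝[>] 0) (𝓝 (F 0)) := by
      rw [← nhdsWithin_Ioc_eq_nhdsGT one_pos]
      exact ((hc 1 one_pos) 0 ⟨le_rfl, zero_le_one⟩).mono Ioc_subset_Icc_self
    exact ((hlim.eventually_ne (h0 ▸ one_ne_zero)).and self_mem_nhdsWithin).exists.imp
      fun t h => ⟨h.2, h.1⟩
  have hshift := (IsCocycle.of_mul hmul).deriv_add_eq_mul fun t ht => (hd t ht).sub_const 1
  have hF' : ∀ s > 0, F' s = F' t₀ / F t₀ * F s := fun s hs => by
    have hst := hshift s hs t₀ ht₀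
    rw [add_comm, hshift t₀ ht₀ s hs] at hst
    field_simp
    linear_combination hst
  refine ⟨F' t₀ / F t₀, fun t ht => ?_⟩
  have := eq_mul_exp_of_hasDerivAt ht.le (hc t ht) fun s hs => hF' s hs.1 ▸ hd s hs.1
  rwa [h0, one_mul, sub_zero] at this

section

variable {E E1 : ℝ → ℝ} {β lam : ℝ}

lemma hasDerivAt_exp_mul_of_eq_integral {t : ℝ} (hEc : ContinuousOn E (Ioi 0))
    (hEi : IntervalIntegrable E volume 0 t)
    (hE1 : ∀ T, E1 T = 1 + β * ∫ s in (0:ℝ)..T, exp (lam * s) * E s) (ht : 0 < t) :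
    HasDerivAt (fun u => exp (-lam * u) * E1 u) (-lam * (exp (-lam * t) * E1 t) + β * E t) t := by
  have hI := hasDerivAt_integral_of_continuousOn ((by fun_prop : Continuous fun s =>
    exp (lam * s)).continuousOn.mul hEc) isOpen_Ioi ht (hEi.continuousOn_mul (by fun_prop))
  rw [show E1 = _ from funext hE1]
  refine (((hasDerivAt_id t).const_mul (-lam)).exp.mul
    ((hI.const_mul β).const_add 1)).congr_deriv ?_
  have : exp (-lam * t) * exp (lam * t) = 1 := by rw [← exp_add]; simp
  simp only [Pi.mul_apply, id]
  linear_combination β * E t * this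

lemma continuousOn_exp_mul_of_eq_integral {T : ℝ} (hEi : IntervalIntegrable E volume 0 T)
    (hE1 : ∀ T, E1 T = 1 + β * ∫ s in (0:ℝ)..T, exp (lam * s) * E s) (hT : 0 ≤ T) :
    ContinuousOn (fun u => exp (-lam * u) * E1 u) (Icc 0 T) := by
  have hI := continuousOn_primitive_interval'
    (hEi.continuousOn_mul (g := fun s => exp (lam * s)) (by fun_prop)) left_mem_uIcc
  rw [uIcc_of_le hT] at hI
  rw [show E1 = _ from funext hE1]
  exact (by fun_prop : Continuous fun u => exp (-lam * u)).continuousOn.mul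
    (continuousOn_const.add (continuousOn_const.mul hI))

lemma isCocycle_of_markov {b0 x : ℝ}
    (h : ∀ t T : ℝ, 0 < t → t < T →
      exp (-lam * T) * E1 T * x + b0 * ∫ s in (0:ℝ)..T, E s
        = exp (-lam * T) * E1 (T - t) * E1 t * x
          + b0 * exp (-lam * (T - t)) * E1 (T - t) * (∫ s in (0:ℝ)..t, E s)
          + b0 * ∫ s in (0:ℝ)..(T - t), E s) :
    IsCocycle (fun u => exp (-lam * u) * E1 u)
      fun u => x * (exp (-lam * u) * E1 u - 1) + b0 * ∫ s in (0:ℝ)..u, E s := by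
  intro s hs t ht
  have hst := h t (s + t) ht (by linarith)
  simp only [add_sub_cancel_right] at hst
  have hexp : exp (-lam * (s + t)) = exp (-lam * s) * exp (-lam * t) := by
    rw [← exp_add]; ring_nf
  linear_combination hst + x * E1 s * E1 t * hexp

end

section

variable {E F G : ℝ → ℝ} {b0 β lam x : ℝ}

lemma exists_eq_mul_exp_of_beta_eq_zero (hF : ∀ t > 0, F t = exp (-lam * t))
    (hF' : ∀ t > 0, HasDerivAt F (-lam * F t) t) (hG' : ∀ t > 0, HasDerivAt G (E t) t)
    (hb0 : b0 ≠ 0) (hcoc : IsCocycle F fun t => x * (F t - 1) + b0 * G t) :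
    ∃ c, ∀ t > 0, E t = c * exp (-lam * t) := by
  have hmul : ∀ s > 0, ∀ t > 0, F (s + t) = F s * F t := fun s hs t ht => by
    rw [hF _ (add_pos hs ht), hF s hs, hF t ht, ← exp_add]; ring_nf
  have hshift : ∀ s > 0, ∀ t > 0, E (s + t) = F s * E t := fun s hs t ht => by
    have hst := hcoc.deriv_add_eq_mul
      (fun t ht => (((hF' t ht).sub_const 1).const_mul x).add ((hG' t ht).const_mul b0)) s hs t ht
    rw [hmul s hs t ht] at hst
    exact mul_left_cancel₀ hb0 (by linear_combination hst)
  refine ⟨E 1 / F 1, fun t ht => ?_⟩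
  rw [eq_div_mul_of_add_eq_mul hshift (hF 1 one_pos ▸ exp_ne_zero _) t ht, hF t ht]

lemma mul_or_eq_zero_of_isCocycle (hF' : ∀ t > 0, HasDerivAt F (-lam * F t + β * E t) t)
    (hG' : ∀ t > 0, HasDerivAt G (E t) t) (hcoc : IsCocycle F fun t => x * (F t - 1) + b0 * G t)
    (hx : b0 = 0 ∧ x ≠ 0 ∨ x = 0 ∧ b0 ≠ 0 ∨ lam * x ≠ 0 ∧ x * β + b0 = 0) :
    (∀ s > 0, ∀ t > 0, F (s + t) = F s * F t) ∨ ∀ t > 0, E t = 0 := by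
  refine hcoc.mul_or_eq_zero.elim Or.inl fun hψ => ?_
  have hψ' : ∀ t > 0, x * (-lam * F t + β * E t) + b0 * E t = 0 := fun t ht => by
    refine ((((hF' t ht).sub_const 1).const_mul x).add ((hG' t ht).const_mul b0)).unique
      ((hasDerivAt_const t 0).congr_of_eventuallyEq ?_)
    filter_upwards [Ioi_mem_nhds ht] with u hu
    exact hψ u hu
  -- in the three cases `ψ ≡ 0` forces `F ≡ 1`, `E ≡ 0`, resp. `F ≡ 0`
  have hconst : ∀ c : ℝ, c * c = c → (∀ t > 0, F t = c) →
      ∀ s > 0, ∀ t > 0, F (s + t) = F s * F t := fun c hc hF s hs t ht => by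
    rw [hF _ (add_pos hs ht), hF s hs, hF t ht, hc]
  rcases hx with ⟨hb0, hx⟩ | ⟨hx, hb0⟩ | ⟨hlx, hxb⟩
  · refine .inl (hconst 1 (one_mul 1) fun t ht => ?_)
    have := hψ t ht
    rw [hb0, zero_mul, add_zero, mul_eq_zero, sub_eq_zero] at this
    exact this.resolve_left hx
  · refine .inr fun t ht => (mul_eq_zero.1 ?_).resolve_left hb0
    simpa [hx] using hψ' t ht
  · refine .inl (hconst 0 (zero_mul 0) fun t ht => (mul_eq_zero.1 ?_).resolve_left hlx)
    linear_combination -hψ' t ht + E t * hxb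

lemma exists_eq_mul_exp_of_mul (hβ : β ≠ 0) (hF' : ∀ t > 0, HasDerivAt F (-lam * F t + β * E t) t)
    (hFc : ∀ T > 0, ContinuousOn F (Icc 0 T)) (hF0 : F 0 = 1)
    (hmul : ∀ s > 0, ∀ t > 0, F (s + t) = F s * F t) :
    ∃ c μ, β * c = μ + lam ∧ ∀ t > 0, E t = c * exp (μ * t) := by
  obtain ⟨μ, hμ⟩ := exists_eq_exp_of_mul hmul hF' hFc hF0
  refine ⟨(μ + lam) / β, μ, by field_simp, fun t ht => ?_⟩
  have hexp : HasDerivAt F (μ * exp (μ * t)) t := by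
    refine (((hasDerivAt_id t).const_mul μ).exp.congr_deriv
      (by simp [mul_comm])).congr_of_eventuallyEq ?_
    filter_upwards [Ioi_mem_nhds ht] with u hu
    exact hμ u hu
  have h := (hF' t ht).unique hexp
  rw [hμ t ht] at h
  field_simp
  linear_combination h

end

lemma eq_mul_exp_of_volterra {K E : ℝ → ℝ} {β lam μ c : ℝ} (hKc : ContinuousOn K (Ioi 0))
    (hKi : ∀ T > 0, IntervalIntegrable K volume 0 T) (hc : β * c = μ + lam)
    (hE : ∀ s > 0, E s = c * exp (μ * s))
    (hVolt : ∀ t > 0, E t = K t + β * ∫ s in (0:ℝ)..t, K (t - s) * E s) :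
    ∀ t > 0, K t = c * exp (-lam * t) := by
  set P := fun t => ∫ u in (0:ℝ)..t, K u * exp (-μ * u)
  have hPi : ∀ T > 0, IntervalIntegrable (fun u => K u * exp (-μ * u)) volume 0 T :=
    fun T hT => (hKi T hT).mul_continuousOn (by fun_prop)
  have hK : ∀ t > 0, K t = c * exp (μ * t) * (1 - β * P t) := fun t ht => by
    have hconv : ∫ s in (0:ℝ)..t, K (t - s) * E s = c * exp (μ * t) * P t :=
      calc ∫ s in (0:ℝ)..t, K (t - s) * E s
          = ∫ s in (0:ℝ)..t, K (t - s) * (c * exp (μ * s)) :=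
            integral_congr_ae (.of_forall fun s hs => by
              rw [uIoc_of_le ht.le] at hs
              rw [hE s hs.1])
        _ = ∫ u in (0:ℝ)..t, K u * (c * exp (μ * (t - u))) := by
            simpa using integral_comp_sub_left (a := 0) (b := t)
              (fun u => K u * (c * exp (μ * (t - u)))) t
        _ = ∫ u in (0:ℝ)..t, c * exp (μ * t) * (K u * exp (-μ * u)) :=
            integral_congr fun u _ => by
              rw [mul_sub, sub_eq_add_neg, exp_add, ← neg_mul]
              ring
        _ = c * exp (μ * t) * P t := integral_const_mul _ _
    have h := hVolt t ht
    rw [hconv, hE t ht] at h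
    linear_combination -h
  have hR : ∀ t > 0, 1 - β * P t = exp (-(β * c) * t) := fun t ht => by
    have hPc := continuousOn_primitive_interval' (hPi t ht) left_mem_uIcc
    rw [uIcc_of_le ht.le] at hPc
    have := eq_mul_exp_of_hasDerivAt (F := fun t => 1 - β * P t) (μ := -(β * c)) ht.le
      (continuousOn_const.sub (continuousOn_const.mul hPc)) fun s hs => by
        refine (((hasDerivAt_integral_of_continuousOn (hKc.mul (by fun_prop : Continuous
          fun u => exp (-μ * u)).continuousOn) isOpen_Ioi hs.1 (hPi s hs.1)).const_mul β).const_sub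
          1).congr_deriv ?_
        have h := hK s hs.1
        have : exp (μ * s) * exp (-μ * s) = 1 := by rw [← exp_add]; simp
        simp only [Pi.mul_apply]
        rw [h]
        linear_combination (-(β * c) * (1 - β * P s)) * this
    simpa [P] using this
  intro t ht
  rw [hK t ht, hR t ht, mul_assoc, ← exp_add]
  congr 2
  linear_combination -t * hc

/-- Deterministic core of Theorem 2.1 (affine drift case): the first-moment identity
forced by the time-homogeneous Markov property implies that the kernel is exponential. -/
theorem stmt_0
    (K E : ℝ → ℝ) (b0 β lam : ℝ) (D : Set ℝ) (hD : D.Nonempty)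
    (hKc : ContinuousOn K (Set.Ioi 0))
    (hKL2 : ∀ T > 0, MeasureTheory.IntegrableOn (fun s => (K s) ^ 2) (Set.Ioc 0 T))
    (hEc : ContinuousOn E (Set.Ioi 0))
    (hEL2 : ∀ T > 0, MeasureTheory.IntegrableOn (fun s => (E s) ^ 2) (Set.Ioc 0 T))
    (hVolt : ∀ t > 0, E t = K t + β * ∫ s in (0:ℝ)..t, K (t - s) * E s)
    (E1 : ℝ → ℝ)
    (hE1 : ∀ T : ℝ, E1 T = 1 + β * ∫ s in (0:ℝ)..T, Real.exp (lam * s) * E s)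
    (hMain : ∀ x ∈ D, ∀ t T : ℝ, 0 < t → t < T →
      Real.exp (-lam * T) * E1 T * x + b0 * ∫ s in (0:ℝ)..T, E s
        = Real.exp (-lam * T) * E1 (T - t) * E1 t * x
          + b0 * Real.exp (-lam * (T - t)) * E1 (T - t) * (∫ s in (0:ℝ)..t, E s)
          + b0 * ∫ s in (0:ℝ)..(T - t), E s)
    (hne : b0 ≠ 0 ∨ β ≠ 0)
    (h1 : b0 = 0 → β ≠ 0 → ∃ x ∈ D, x ≠ 0)
    (h2 : b0 ≠ 0 → β ≠ 0 → lam = 0 → (0:ℝ) ∈ D)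
    (h3 : b0 ≠ 0 → β ≠ 0 → lam ≠ 0 → -b0 / β ∈ D) :
    ∃ c : ℝ, ∀ t > 0, K t = c * Real.exp (-lam * t) := by
  have hEi T (hT : 0 < T) := intervalIntegrable_of_integrableOn_sq hEc (hEL2 T hT) hT.le
  have hF' t (ht : 0 < t) := hasDerivAt_exp_mul_of_eq_integral hEc (hEi t ht) hE1 ht
  have hG' t (ht : 0 < t) := hasDerivAt_integral_of_continuousOn hEc isOpen_Ioi ht (hEi t ht)
  have hcoc x (hx : x ∈ D) := isCocycle_of_markov (b0 := b0) (x := x) (hMain x hx)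
  suffices ∃ c μ, β * c = μ + lam ∧ ∀ t > 0, E t = c * exp (μ * t) by
    obtain ⟨c, μ, hcμ, hE⟩ := this
    exact ⟨c, eq_mul_exp_of_volterra hKc
      (fun T hT => intervalIntegrable_of_integrableOn_sq hKc (hKL2 T hT) hT.le) hcμ hE hVolt⟩
  rcases eq_or_ne β 0 with hβ | hβ
  · obtain ⟨x, hx⟩ := hD
    obtain ⟨c, hc⟩ := exists_eq_mul_exp_of_beta_eq_zero
      (F := fun u => exp (-lam * u) * E1 u) (lam := lam) (fun t _ => by simp [hE1, hβ])
      (by simpa [hβ] using hF') hG' (hne.resolve_right (· hβ)) (hcoc x hx)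
    exact ⟨c, -lam, by simp [hβ], hc⟩
  obtain ⟨x, hx, hxcase⟩ : ∃ x ∈ D,
      b0 = 0 ∧ x ≠ 0 ∨ x = 0 ∧ b0 ≠ 0 ∨ lam * x ≠ 0 ∧ x * β + b0 = 0 := by
    rcases eq_or_ne b0 0 with hb0 | hb0
    · obtain ⟨x, hx, hx0⟩ := h1 hb0 hβ
      exact ⟨x, hx, .inl ⟨hb0, hx0⟩⟩
    rcases eq_or_ne lam 0 with hl | hl
    · exact ⟨0, h2 hb0 hβ hl, .inr (.inl ⟨rfl, hb0⟩)⟩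
    · refine ⟨-b0 / β, h3 hb0 hβ hl, .inr (.inr ⟨?_, by field_simp; ring⟩)⟩
      exact mul_ne_zero hl (div_ne_zero (neg_ne_zero.2 hb0) hβ)
  rcases mul_or_eq_zero_of_isCocycle hF' hG' (hcoc x hx) hxcase with hmul | hE0
  · exact exists_eq_mul_exp_of_mul hβ hF'
      (fun T hT => continuousOn_exp_mul_of_eq_integral (hEi T hT) hE1 hT.le) (by simp [hE1]) hmul
  · exact ⟨0, -lam, by ring, fun t ht => by simp [hE0 t ht]⟩
end

section
/- Let λ ∈ ℝ and let K : (0,∞) → ℝ be continuous and integrable on (0,T] for every T > 0. Suppose that for all 0 < t < T one has ∫₀ᵀ K(s) ds = e^{−λ(T−t)} ∫₀ᵗ K(s) ds + ∫₀^{T−t} K(s) ds. Then the limit c := lim_{t→0⁺} K(t) exists in ℝ and K(t) = c e^{−λt} for all t > 0. -/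
open MeasureTheory Set Filter intervalIntegral

/-! Writing `F x = ∫₀ˣ K`, the hypothesis says `F (t + u) = e^{-λu} F t + F u`. Differentiating
in `t` gives `K (t + u) = e^{-λu} K t`, so `t ↦ e^{λt} K t` is invariant under every positive
shift of `(0, ∞)`, hence constant. -/

theorem hasDerivAt_integral_of_continuousOn_Ioi {E : Type*} [NormedAddCommGroup E]
    [NormedSpace ℝ E] [CompleteSpace E] {K : ℝ → E} {a t : ℝ}
    (hKc : ContinuousOn K (Ioi a)) (hat : a < t) (hKint : IntegrableOn K (Ioc a t)) :
    HasDerivAt (fun x => ∫ s in a..x, K s) (K t) t :=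
  integral_hasDerivAt_right
    ((intervalIntegrable_iff_integrableOn_Ioc_of_le hat.le).2 hKint)
    ⟨Ioi a, Ioi_mem_nhds hat, hKc.aestronglyMeasurable measurableSet_Ioi⟩
    (hKc.continuousAt (Ioi_mem_nhds hat))

theorem apply_add_eq_exp_mul_of_integral_add_eq {lam : ℝ} {K : ℝ → ℝ}
    (hKc : ContinuousOn K (Ioi 0)) (hKint : ∀ T > 0, IntegrableOn K (Ioc 0 T))
    (hfun : ∀ t T : ℝ, 0 < t → t < T →
      (∫ s in (0:ℝ)..T, K s)
        = Real.exp (-lam * (T - t)) * (∫ s in (0:ℝ)..t, K s) + ∫ s in (0:ℝ)..(T - t), K s)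
    {t u : ℝ} (ht : 0 < t) (hu : 0 < u) :
    K (t + u) = Real.exp (-lam * u) * K t := by
  set F : ℝ → ℝ := fun x => ∫ s in (0:ℝ)..x, K s
  have hF : ∀ x, 0 < x → HasDerivAt F (K x) x := fun x hx =>
    hasDerivAt_integral_of_continuousOn_Ioi hKc hx (hKint x hx)
  have hshift : HasDerivAt (fun x => F (x + u)) (K (t + u)) t :=
    (hF (t + u) (by positivity)).comp_add_const t u
  have hrhs : HasDerivAt (fun x => Real.exp (-lam * u) * F x + F u)
      (Real.exp (-lam * u) * K t) t :=
    ((hF t ht).const_mul _).add_const (F u)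
  have heq : (fun x => Real.exp (-lam * u) * F x + F u) =ᶠ[nhds t] fun x => F (x + u) := by
    filter_upwards [Ioi_mem_nhds ht] with x hx
    simpa using (hfun x (x + u) hx (by linarith)).symm
  exact hshift.unique (hrhs.congr_of_eventuallyEq heq.symm)

theorem eq_of_forall_add_eq_on_Ioi {α : Type*} {g : ℝ → α}
    (hg : ∀ t u : ℝ, 0 < t → 0 < u → g (t + u) = g t) {t s : ℝ} (ht : 0 < t) (hs : 0 < s) :
    g t = g s := by
  rw [← hg t s ht hs, add_comm, hg s t hs ht]

theorem eq_mul_exp_of_apply_add_eq_exp_mul {lam : ℝ} {f : ℝ → ℝ}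
    (hf : ∀ t u : ℝ, 0 < t → 0 < u → f (t + u) = Real.exp (-lam * u) * f t)
    {t : ℝ} (ht : 0 < t) :
    f t = Real.exp lam * f 1 * Real.exp (-lam * t) := by
  have hinv : ∀ t u : ℝ, 0 < t → 0 < u →
      Real.exp (lam * (t + u)) * f (t + u) = Real.exp (lam * t) * f t := by
    intro t u ht hu
    rw [hf t u ht hu, ← mul_assoc, ← Real.exp_add]
    ring_nf
  have hconst := eq_of_forall_add_eq_on_Ioi (g := fun t => Real.exp (lam * t) * f t) hinv ht one_pos
  rw [mul_one] at hconst
  rw [← hconst, mul_comm (Real.exp _), mul_assoc, ← Real.exp_add]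
  simp

/-- Case 1 (β = 0, b₀ ≠ 0) of the affine-drift theorem: the additive functional
equation forced on the kernel implies that it is an exponential. -/
theorem stmt_1 (lam : ℝ) (K : ℝ → ℝ)
    (hKc : ContinuousOn K (Set.Ioi 0))
    (hKint : ∀ T > 0, MeasureTheory.IntegrableOn K (Set.Ioc 0 T))
    (hfun : ∀ t T : ℝ, 0 < t → t < T →
      (∫ s in (0:ℝ)..T, K s)
        = Real.exp (-lam * (T - t)) * (∫ s in (0:ℝ)..t, K s)
          + ∫ s in (0:ℝ)..(T - t), K s) :
    ∃ c : ℝ, Filter.Tendsto K (nhdsWithin 0 (Set.Ioi 0)) (nhds c) ∧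
      ∀ t > 0, K t = c * Real.exp (-lam * t) := by
  have hK : ∀ t > 0, K t = Real.exp lam * K 1 * Real.exp (-lam * t) := fun t ht =>
    eq_mul_exp_of_apply_add_eq_exp_mul
      (fun _ _ ht hu => apply_add_eq_exp_mul_of_integral_add_eq hKc hKint hfun ht hu) ht
  refine ⟨Real.exp lam * K 1, ?_, hK⟩
  have hexp : Tendsto (fun t => Real.exp lam * K 1 * Real.exp (-lam * t))
      (nhdsWithin 0 (Ioi 0)) (nhds (Real.exp lam * K 1)) := by
    have hcont : Continuous fun t : ℝ => Real.exp lam * K 1 * Real.exp (-lam * t) := by fun_prop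
    simpa using (hcont.tendsto 0).mono_left nhdsWithin_le_nhds
  exact hexp.congr' (eventually_nhdsWithin_of_forall fun t ht => (hK t ht).symm)
end

section
/- Let λ ∈ ℝ, β ≠ 0, and let K : (0,∞) → ℝ be continuous and locally square-integrable. Let E : (0,∞) → ℝ be continuous and locally square-integrable, satisfying E(t) = K(t) + β ∫₀ᵗ K(t−s) E(s) ds for all t > 0, and define E₁(T) := 1 + β ∫₀ᵀ e^{λs} E(s) ds. If E₁(T) = E₁(T−t) E₁(t) for all 0 < t < T, then the limit e₀ := lim_{t→0⁺} E(t) exists in ℝ, E₁(T) = e^{β e₀ T} for all T ≥ 0, E(t) = e₀ e^{(β e₀ − λ) t} for all t > 0, and K(t) = e₀ e^{−λt} for all t > 0. -/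
/-!
Differentiating the identity `E₁(s + t) = E₁(s) E₁(t)` in `s` gives `E₁' = c E₁` on `(0, ∞)`,
so `E₁(T) = e^{cT}`; comparing with `E₁'(t) = β e^{λt} E(t)` shows `E(t) = e₀ e^{(c - λ)t}` with
`c = β e₀`. Inserting this into the Volterra equation, `y = e₀ - c ∫₀ᵗ e^{-(c-λ)s} K(s) ds` solves
`y' = -c y`, `y(0) = e₀`, and `K(t) = e^{(c-λ)t} y(t)` is then `e₀ e^{-λt}`.
-/

open MeasureTheory Set Filter intervalIntegral

theorem MeasureTheory.IntegrableOn.of_sq {α : Type*} [MeasurableSpace α] {μ : Measure α}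
    {f : α → ℝ} {s : Set α} (hs : μ s ≠ ⊤) (hf : AEStronglyMeasurable f (μ.restrict s))
    (hsq : IntegrableOn (fun x => f x ^ 2) s μ) : IntegrableOn f s μ := by
  have : IsFiniteMeasure (μ.restrict s) := isFiniteMeasure_restrict.mpr hs
  exact ((memLp_two_iff_integrable_sq hf).2 hsq).integrable one_le_two

theorem intervalIntegrable_exp_mul_of_sq {f : ℝ → ℝ} (hfc : ContinuousOn f (Ioi 0))
    (hsq : ∀ T > 0, IntegrableOn (fun s => f s ^ 2) (Ioc 0 T)) (a : ℝ) {T : ℝ} (hT : 0 < T) :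
    IntervalIntegrable (fun s => Real.exp (a * s) * f s) volume 0 T := by
  have hf : IntegrableOn f (Ioc 0 T) :=
    .of_sq measure_Ioc_lt_top.ne
      ((hfc.mono Ioc_subset_Ioi_self).aestronglyMeasurable measurableSet_Ioc) (hsq T hT)
  exact ((intervalIntegrable_iff_integrableOn_Ioc_of_le hT.le).2 hf).continuousOn_mul
    (by fun_prop)

theorem continuousWithinAt_integral_Ici {g : ℝ → ℝ} {a b : ℝ} (hab : a < b)
    (hg : IntervalIntegrable g volume a b) :
    ContinuousWithinAt (fun u => ∫ s in a..u, g s) (Ici a) a := by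
  refine (continuousWithinAt_primitive (b₁ := a) (b₂ := b) Real.volume_singleton
    ?_).mono_of_mem_nhdsWithin (Icc_mem_nhdsGE hab)
  simpa [hab.le] using hg

theorem hasDerivAt_integral_of_continuousOn_Ioi_s3 {g : ℝ → ℝ} (hgc : ContinuousOn g (Ioi 0))
    {t : ℝ} (ht : 0 < t) (hg : IntervalIntegrable g volume 0 t) :
    HasDerivAt (fun u => ∫ s in (0:ℝ)..u, g s) (g t) t :=
  integral_hasDerivAt_right hg (hgc.stronglyMeasurableAtFilter isOpen_Ioi t ht)
    (hgc.continuousAt (isOpen_Ioi.mem_nhds ht))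

theorem eq_mul_exp_of_hasDerivAt_s3 {y : ℝ → ℝ} {a : ℝ} (hc : ContinuousWithinAt y (Ici 0) 0)
    (hd : ∀ t > 0, HasDerivAt y (a * y t) t) {t : ℝ} (ht : 0 ≤ t) :
    y t = y 0 * Real.exp (a * t) := by
  rcases ht.eq_or_lt with rfl | ht
  · simp
  set z : ℝ → ℝ := fun u => Real.exp (-(a * u)) * y u
  have hzd : ∀ u > 0, HasDerivAt z 0 u := fun u hu =>
    (((hasDerivAt_id u).const_mul a).neg.exp.mul (hd u hu)).congr_deriv
      (by simp only [id_eq, Pi.neg_apply, mul_one, mul_neg, neg_mul]; ring)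
  have hzc : ContinuousOn z (Icc 0 t) := by
    intro u hu
    rcases hu.1.eq_or_lt with rfl | hu0
    · exact ((by fun_prop : Continuous fun u => Real.exp (-(a * u))).continuousWithinAt.mul
        hc).mono Icc_subset_Ici_self
    · exact (hzd u hu0).continuousAt.continuousWithinAt
  obtain ⟨_, _, hslope⟩ := exists_hasDerivAt_eq_slope z (fun _ => 0) ht hzc
    fun u hu => hzd u hu.1
  have hz : z t = z 0 := by
    rw [eq_comm, div_eq_zero_iff, sub_eq_zero] at hslope
    exact hslope.resolve_right (by simpa using ht.ne')
  calc y t = Real.exp (a * t) * z t := by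
        simp only [z]; rw [← mul_assoc, ← Real.exp_add]; simp
    _ = y 0 * Real.exp (a * t) := by rw [hz, mul_comm]; simp [z]

theorem deriv_add_eq_deriv_mul {F : ℝ → ℝ} (hd : ∀ t > 0, DifferentiableAt ℝ F t)
    (hmul : ∀ s t, 0 < s → 0 < t → F (s + t) = F s * F t) {s t : ℝ} (hs : 0 < s) (ht : 0 < t) :
    deriv F (s + t) = deriv F s * F t := by
  have hshift : HasDerivAt (fun u => F (u + t)) (deriv F (s + t)) s :=
    (hd (s + t) (by positivity)).hasDerivAt.comp_add_const s t
  have heq : (fun u => F (u + t)) =ᶠ[nhds s] fun u => F u * F t := by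
    filter_upwards [isOpen_Ioi.mem_nhds hs] with u hu using hmul u t hu ht
  exact (hshift.congr_of_eventuallyEq heq.symm).unique ((hd s hs).hasDerivAt.mul_const (F t))

theorem exists_eq_exp_of_map_add_eq_mul {F : ℝ → ℝ} (h0 : F 0 = 1)
    (hc : ContinuousWithinAt F (Ici 0) 0) (hd : ∀ t > 0, DifferentiableAt ℝ F t)
    (hmul : ∀ s t, 0 < s → 0 < t → F (s + t) = F s * F t) :
    ∃ c, ∀ t ≥ 0, F t = Real.exp (c * t) := by
  obtain ⟨s₀, hFs₀, hs₀⟩ : ∃ s₀, F s₀ ≠ 0 ∧ 0 < s₀ :=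
    (((hc.mono Ioi_subset_Ici_self).eventually_ne (h0 ▸ one_ne_zero)).and
      self_mem_nhdsWithin).exists
  refine ⟨deriv F s₀ / F s₀, fun t ht => ?_⟩
  have hode : ∀ t > 0, HasDerivAt F (deriv F s₀ / F s₀ * F t) t := fun t ht => by
    have hsymm := deriv_add_eq_deriv_mul hd hmul ht hs₀
    rw [add_comm, deriv_add_eq_deriv_mul hd hmul hs₀ ht] at hsymm
    rw [div_mul_eq_mul_div, hsymm, mul_div_cancel_right₀ _ hFs₀]
    exact (hd t ht).hasDerivAt
  simpa [h0] using eq_mul_exp_of_hasDerivAt_s3 hc hode ht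

theorem exists_eq_exp_of_firstMoment_mul {lam β : ℝ} (hβ : β ≠ 0) {E E1 : ℝ → ℝ}
    (hEc : ContinuousOn E (Ioi 0))
    (hEL2 : ∀ T > 0, IntegrableOn (fun s => E s ^ 2) (Ioc 0 T))
    (hE1 : ∀ T, E1 T = 1 + β * ∫ s in (0:ℝ)..T, Real.exp (lam * s) * E s)
    (hMul : ∀ t T : ℝ, 0 < t → t < T → E1 T = E1 (T - t) * E1 t) :
    ∃ e0, (∀ T ≥ 0, E1 T = Real.exp (β * e0 * T)) ∧
      ∀ t > 0, E t = e0 * Real.exp ((β * e0 - lam) * t) := by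
  have hE1' : E1 = fun T => 1 + β * ∫ s in (0:ℝ)..T, Real.exp (lam * s) * E s := funext hE1
  have hderiv : ∀ t > 0, HasDerivAt E1 (β * (Real.exp (lam * t) * E t)) t := fun t ht =>
    hE1' ▸ ((hasDerivAt_integral_of_continuousOn_Ioi_s3 (by fun_prop) ht
      (intervalIntegrable_exp_mul_of_sq hEc hEL2 lam ht)).const_mul β).const_add 1
  have hcont : ContinuousWithinAt E1 (Ici 0) 0 := hE1' ▸ continuousWithinAt_const.add
    (continuousWithinAt_const.mul
      (continuousWithinAt_integral_Ici one_pos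
        (intervalIntegrable_exp_mul_of_sq hEc hEL2 lam one_pos)))
  obtain ⟨c, hc⟩ := exists_eq_exp_of_map_add_eq_mul (by simp [hE1]) hcont
    (fun t ht => (hderiv t ht).differentiableAt)
    (fun s t hs ht => by simpa using hMul t (s + t) ht (by linarith))
  have hβc : β * (c / β) = c := mul_div_cancel₀ c hβ
  refine ⟨c / β, by simpa [hβc] using hc, fun t ht => ?_⟩
  have hexp : HasDerivAt E1 (c * Real.exp (c * t)) t := by
    refine (((hasDerivAt_id t).const_mul c).exp.congr_deriv
      (by simp [mul_comm])).congr_of_eventuallyEq ?_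
    filter_upwards [isOpen_Ioi.mem_nhds ht] with u hu using hc u (le_of_lt hu)
  have h := (hderiv t ht).unique hexp
  have hEt : E t = c * Real.exp (c * t) / (β * Real.exp (lam * t)) := by
    rw [← h]; field_simp
  rw [hEt, hβc, sub_mul, Real.exp_sub]
  ring

theorem integral_sub_mul_eq_exp_mul {K E : ℝ → ℝ} {e0 a t : ℝ} (ht : 0 ≤ t)
    (hE : ∀ s > 0, E s = e0 * Real.exp (a * s)) :
    ∫ s in (0:ℝ)..t, K (t - s) * E s =
      e0 * Real.exp (a * t) * ∫ s in (0:ℝ)..t, Real.exp (-a * s) * K s := by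
  calc ∫ s in (0:ℝ)..t, K (t - s) * E s
      = ∫ s in (0:ℝ)..t,
          e0 * Real.exp (a * t) * (Real.exp (-a * (t - s)) * K (t - s)) := by
        refine integral_congr_ae (Eventually.of_forall fun s hs => ?_)
        rw [uIoc_of_le ht] at hs
        rw [hE s hs.1, show a * s = a * t + -a * (t - s) by ring, Real.exp_add]
        ring
    _ = e0 * Real.exp (a * t) * ∫ s in (0:ℝ)..t, Real.exp (-a * s) * K s := by
        rw [intervalIntegral.integral_const_mul,
          integral_comp_sub_left (fun u => Real.exp (-a * u) * K u)]
        simp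

theorem kernel_eq_exp_of_resolvent_eq_exp {β e0 a : ℝ} {K E : ℝ → ℝ}
    (hKc : ContinuousOn K (Ioi 0))
    (hKL2 : ∀ T > 0, IntegrableOn (fun s => K s ^ 2) (Ioc 0 T))
    (hE : ∀ t > 0, E t = e0 * Real.exp (a * t))
    (hVolt : ∀ t > 0, E t = K t + β * ∫ s in (0:ℝ)..t, K (t - s) * E s) :
    ∀ t > 0, K t = e0 * Real.exp ((a - β * e0) * t) := by
  set Ψ : ℝ → ℝ := fun t => ∫ s in (0:ℝ)..t, Real.exp (-a * s) * K s
  have hΨd : ∀ t > 0, HasDerivAt Ψ (Real.exp (-a * t) * K t) t := fun t ht =>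
    hasDerivAt_integral_of_continuousOn_Ioi_s3 (by fun_prop) ht
      (intervalIntegrable_exp_mul_of_sq hKc hKL2 (-a) ht)
  have hK : ∀ t > 0, Real.exp (-a * t) * K t = e0 - β * e0 * Ψ t := fun t ht => by
    have h := hVolt t ht
    rw [hE t ht, integral_sub_mul_eq_exp_mul ht.le hE] at h
    have hinv : Real.exp (-a * t) * Real.exp (a * t) = 1 := by
      rw [← Real.exp_add]; simp
    linear_combination -Real.exp (-a * t) * h + (e0 - β * e0 * Ψ t) * hinv
  set y : ℝ → ℝ := fun t => e0 - β * e0 * Ψ t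
  have hyd : ∀ t > 0, HasDerivAt y (-(β * e0) * y t) t := fun t ht =>
    (((hΨd t ht).const_mul (β * e0)).const_sub e0).congr_deriv (by rw [hK t ht]; ring)
  have hyc : ContinuousWithinAt y (Ici 0) 0 := continuousWithinAt_const.sub
    ((continuousWithinAt_integral_Ici one_pos
      (intervalIntegrable_exp_mul_of_sq hKc hKL2 (-a) one_pos)).const_mul _)
  intro t ht
  have hy := eq_mul_exp_of_hasDerivAt_s3 hyc hyd ht.le
  have hKy : K t = Real.exp (a * t) * y t := by
    rw [show y t = _ from (hK t ht).symm, ← mul_assoc, ← Real.exp_add]; simp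
  have hy0 : y 0 = e0 := by simp [y, Ψ]
  rw [hKy, hy, hy0, mul_left_comm, ← Real.exp_add]
  ring_nf

/-- Case 2 (b₀ = 0, β ≠ 0) of the affine-drift theorem: multiplicativity of
`E₁` forces `E` and `K` to be exponentials. -/
theorem stmt_3 (lam β : ℝ) (hβ : β ≠ 0) (K E : ℝ → ℝ)
    (hKc : ContinuousOn K (Set.Ioi 0))
    (hKL2 : ∀ T > 0, MeasureTheory.IntegrableOn (fun s => (K s) ^ 2) (Set.Ioc 0 T))
    (hEc : ContinuousOn E (Set.Ioi 0))
    (hEL2 : ∀ T > 0, MeasureTheory.IntegrableOn (fun s => (E s) ^ 2) (Set.Ioc 0 T))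
    (hVolt : ∀ t > 0, E t = K t + β * ∫ s in (0:ℝ)..t, K (t - s) * E s)
    (E1 : ℝ → ℝ)
    (hE1 : ∀ T : ℝ, E1 T = 1 + β * ∫ s in (0:ℝ)..T, Real.exp (lam * s) * E s)
    (hMul : ∀ t T : ℝ, 0 < t → t < T → E1 T = E1 (T - t) * E1 t) :
    ∃ e0 : ℝ, Filter.Tendsto E (nhdsWithin 0 (Set.Ioi 0)) (nhds e0) ∧
      (∀ T : ℝ, 0 ≤ T → E1 T = Real.exp (β * e0 * T)) ∧
      (∀ t > 0, E t = e0 * Real.exp ((β * e0 - lam) * t)) ∧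
      (∀ t > 0, K t = e0 * Real.exp (-lam * t)) := by
  obtain ⟨e0, hE1exp, hE⟩ := exists_eq_exp_of_firstMoment_mul hβ hEc hEL2 hE1 hMul
  refine ⟨e0, ?_, hE1exp, hE, fun t ht => ?_⟩
  · have hlim : Tendsto (fun t => e0 * Real.exp ((β * e0 - lam) * t)) (nhdsWithin 0 (Ioi 0))
        (nhds e0) := by
      simpa using ((by fun_prop : Continuous fun t => e0 * Real.exp ((β * e0 - lam) * t)).tendsto
        0).mono_left nhdsWithin_le_nhds
    exact hlim.congr' (eventually_nhdsWithin_of_forall fun t ht => (hE t ht).symm)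
  · rw [kernel_eq_exp_of_resolvent_eq_exp hKc hKL2 hE hVolt t ht]
    ring_nf
end

section
/- Let Ē : [0,∞) → ℝ be continuous with Ē(0) = 1, differentiable on (0,∞) with continuous derivative, and suppose ∫_{T−t}^{T} Ē(s) ds = Ē(T−t) ∫₀ᵗ Ē(s) ds for all 0 < t < T. Then the limit c := lim_{t→0⁺} Ē'(t) exists in ℝ and Ē(t) = e^{c t} for all t ≥ 0. -/
open MeasureTheory Set Filter intervalIntegral

/-!
Write `G t = ∫₀ᵗ Ē`. Differentiating the functional equation
`∫_{T−t}^{T} Ē = Ē(T−t) G(t)` in `t` gives `Ē'(u) G(t) = Ē(u) (Ē(t) − 1)` for all `u, t > 0`.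
Since `Ē(0) = 1`, `G` does not vanish identically on `(0, ∞)`, so fixing `t₀` with `G(t₀) ≠ 0`
turns this into the linear equation `Ē' = c Ē` with `c = (Ē(t₀) − 1) / G(t₀)`, whence
`Ē(t) = e^{ct}`, and `Ē'(t) = c Ē(t) → c` as `t → 0⁺`.
-/

section

variable {f : ℝ → ℝ} {a b t : ℝ}

theorem hasDerivAt_integral_right_of_continuousOn_Ici (hf : ContinuousOn f (Ici a))
    (hb : a ≤ b) (ht : a < t) : HasDerivAt (fun x => ∫ s in b..x, f s) (f t) t :=
  integral_hasDerivAt_right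
    (hf.mono fun _ hx => le_trans (le_min hb ht.le) hx.1).intervalIntegrable
    ((hf.mono Ioi_subset_Ici_self).stronglyMeasurableAtFilter isOpen_Ioi t ht)
    (hf.continuousAt (Ici_mem_nhds ht))

theorem hasDerivAt_integral_left_of_continuousOn_Ici (hf : ContinuousOn f (Ici a))
    (hb : a ≤ b) (ht : a < t) : HasDerivAt (fun x => ∫ s in x..b, f s) (-f t) t :=
  integral_hasDerivAt_left
    (hf.mono fun _ hx => le_trans (le_min ht.le hb) hx.1).intervalIntegrable
    ((hf.mono Ioi_subset_Ici_self).stronglyMeasurableAtFilter isOpen_Ioi t ht)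
    (hf.continuousAt (Ici_mem_nhds ht))

theorem exists_integral_ne_zero_of_continuousOn_Ici (hf : ContinuousOn f (Ici a))
    (ha : f a ≠ 0) : ∃ t > a, ∫ s in a..t, f s ≠ 0 := by
  by_contra! h
  have hzero : ∀ t > a, f t = 0 := fun t ht =>
    (hasDerivAt_integral_right_of_continuousOn_Ici hf le_rfl ht).unique <|
      (hasDerivAt_const t 0).congr_of_eventuallyEq <| by
        filter_upwards [Ioi_mem_nhds ht] with x hx using h x hx
  refine ha (tendsto_nhds_unique ((hf a self_mem_Ici).mono Ioi_subset_Ici_self) ?_)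
  exact tendsto_const_nhds.congr' (eventually_nhdsWithin_of_forall fun x hx => (hzero x hx).symm)

theorem eq_mul_exp_of_hasDerivAt_eq_const_mul {k : ℝ} (hf : ContinuousOn f (Ici a))
    (hd : ∀ t > a, HasDerivAt f (k * f t) t) (ht : a ≤ t) :
    f t = f a * Real.exp (k * (t - a)) := by
  set ψ : ℝ → ℝ := fun x => f x * Real.exp (-(k * x))
  have hψ : ψ t = ψ a := by
    rcases ht.eq_or_lt with rfl | hat
    · rfl
    have hψc : ContinuousOn ψ (Icc a t) :=
      (hf.mono Icc_subset_Ici_self).mul (by fun_prop)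
    have hψd : ∀ x ∈ Ioo a t, HasDerivAt ψ 0 x := fun x hx =>
      ((hd x hx.1).mul ((hasDerivAt_id' x).const_mul k).neg.exp).congr_deriv (by ring)
    obtain ⟨c, -, hc⟩ := exists_hasDerivAt_eq_slope ψ (fun _ => 0) hat hψc hψd
    rw [eq_comm, div_eq_zero_iff, sub_eq_zero] at hc
    exact hc.resolve_right (sub_ne_zero.2 hat.ne')
  calc f t = ψ t * Real.exp (k * t) := by simp [ψ, mul_assoc, ← Real.exp_add]
    _ = ψ a * Real.exp (k * t) := by rw [hψ]
    _ = f a * Real.exp (k * (t - a)) := by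
      simp only [ψ, mul_assoc, ← Real.exp_add]
      ring_nf

end

theorem deriv_mul_integral_eq_of_integral_eq {f f' : ℝ → ℝ} (hf : ContinuousOn f (Ici 0))
    (hd : ∀ t > 0, HasDerivAt f (f' t) t)
    (hfun : ∀ t T : ℝ, 0 < t → t < T →
      (∫ s in (T - t)..T, f s) = f (T - t) * ∫ s in (0:ℝ)..t, f s)
    {t T : ℝ} (ht : 0 < t) (htT : t < T) :
    f' (T - t) * ∫ s in (0:ℝ)..t, f s = f (T - t) * (f t - 1) := by
  have hL : HasDerivAt (fun τ => ∫ s in (T - τ)..T, f s) (f (T - t)) t := by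
    simpa using ((hasDerivAt_integral_left_of_continuousOn_Ici hf (ht.trans htT).le
      (sub_pos.2 htT)).comp_const_sub T t)
  have hR : HasDerivAt (fun τ => f (T - τ) * ∫ s in (0:ℝ)..τ, f s)
      (-f' (T - t) * (∫ s in (0:ℝ)..t, f s) + f (T - t) * f t) t :=
    ((hd _ (sub_pos.2 htT)).comp_const_sub T t).mul
      (hasDerivAt_integral_right_of_continuousOn_Ici hf le_rfl ht)
  have hLR : (fun τ => ∫ s in (T - τ)..T, f s) =ᶠ[nhds t]
      fun τ => f (T - τ) * ∫ s in (0:ℝ)..τ, f s := by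
    filter_upwards [Ioo_mem_nhds ht htT] with τ hτ using hfun τ T hτ.1 hτ.2
  linear_combination hL.unique (hR.congr_of_eventuallyEq hLR)

theorem stmt_4_general (Ebar E' : ℝ → ℝ)
    (hc : ContinuousOn Ebar (Set.Ici 0))
    (h0 : Ebar 0 = 1)
    (hderiv : ∀ t > 0, HasDerivAt Ebar (E' t) t)
    (hfun : ∀ t T : ℝ, 0 < t → t < T →
      (∫ s in (T - t)..T, Ebar s) = Ebar (T - t) * ∫ s in (0:ℝ)..t, Ebar s) :
    ∃ c : ℝ, Filter.Tendsto E' (nhdsWithin 0 (Set.Ioi 0)) (nhds c) ∧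
      ∀ t : ℝ, 0 ≤ t → Ebar t = Real.exp (c * t) := by
  obtain ⟨t₀, ht₀, hG⟩ := exists_integral_ne_zero_of_continuousOn_Ici hc (h0 ▸ one_ne_zero)
  set c := (Ebar t₀ - 1) / ∫ s in (0:ℝ)..t₀, Ebar s
  have hE' : ∀ u > 0, E' u = c * Ebar u := fun u hu => by
    have := deriv_mul_integral_eq_of_integral_eq hc hderiv hfun ht₀ (lt_add_of_pos_left t₀ hu)
    rw [add_sub_cancel_right] at this
    rw [div_mul_eq_mul_div, eq_div_iff hG]
    linear_combination this
  refine ⟨c, ?_, fun t ht => ?_⟩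
  · have hlim := ((hc 0 self_mem_Ici).mono Ioi_subset_Ici_self).tendsto.const_mul c
    rw [h0, mul_one] at hlim
    exact hlim.congr' (eventually_nhdsWithin_of_forall fun u hu => (hE' u hu).symm)
  · simpa [h0] using
      eq_mul_exp_of_hasDerivAt_eq_const_mul hc (fun u hu => hE' u hu ▸ hderiv u hu) ht

/-- Functional-equation lemma from Case 4 (b₀, β, λ all nonzero) of the
affine-drift theorem: a continuous function `Ē` with `Ē 0 = 1`, differentiable
on `(0,∞)` with continuous derivative `Ē'`, satisfying
`∫_{T−t}^{T} Ē = Ē(T−t) ∫₀ᵗ Ē` for all `0 < t < T`, is an exponential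
`Ē(t) = exp (c t)` with `c = lim_{t→0⁺} Ē'(t)`. -/
theorem stmt_4 (Ebar E' : ℝ → ℝ)
    (hc : ContinuousOn Ebar (Set.Ici 0))
    (h0 : Ebar 0 = 1)
    (hderiv : ∀ t > 0, HasDerivAt Ebar (E' t) t)
    (hE'c : ContinuousOn E' (Set.Ioi 0))
    (hfun : ∀ t T : ℝ, 0 < t → t < T →
      (∫ s in (T - t)..T, Ebar s) = Ebar (T - t) * ∫ s in (0:ℝ)..t, Ebar s) :
    ∃ c : ℝ, Filter.Tendsto E' (nhdsWithin 0 (Set.Ioi 0)) (nhds c) ∧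
      ∀ t : ℝ, 0 ≤ t → Ebar t = Real.exp (c * t) :=
  stmt_4_general Ebar E' hc h0 hderiv hfun
end

section
/- Let R : (0,∞) → ℝ be continuous, locally integrable, with R(t) ≤ 0 for all t > 0, and suppose that ∫_{T−t}^{T} R(s) ds = (∫₀ᵗ R(s) ds)(1 − ∫₀^{T−t} R(s) ds) for all 0 < t < T. Then the limit c := lim_{t→0⁺} R(t) exists in ℝ, c ≤ 0, and R(t) = c e^{−c t} for all t > 0. -/
open MeasureTheory Set Filter intervalIntegral Real

/-!
With `F t = ∫₀ᵗ R`, the identity says exactly that `G = 1 - F` satisfies Cauchy's exponential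
equation `G (t + s) = G t * G s` on `(0, ∞)`, and `G 1 > 0` because `R ≤ 0`. Differentiating in
`s` gives `G' (t + s) = G t * G' s`; comparing with the same identity for `s + t` shows that
`G' = k G`, so `G t = A e^{k t}`, and `G 2 = G 1 ^ 2` forces `A = 1`. Hence
`R = -G' = c e^{-c t}` with `c = -k`.
-/

section ExponentialEquation

variable {G G' : ℝ → ℝ}

theorem hasDerivAt_add_eq_mul_of_mul_add (hG : ∀ t > 0, HasDerivAt G (G' t) t)
    (hmul : ∀ t > 0, ∀ s > 0, G (t + s) = G t * G s) {t s : ℝ} (ht : 0 < t) (hs : 0 < s) :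
    G' (t + s) = G t * G' s := by
  have hshift : HasDerivAt (fun u => G (t + u)) (G' (t + s)) s :=
    (hG (t + s) (add_pos ht hs)).comp_const_add t s
  have hprod : (fun u => G (t + u)) =ᶠ[nhds s] fun u => G t * G u := by
    filter_upwards [isOpen_Ioi.mem_nhds hs] with u hu using hmul t ht u hu
  exact hshift.unique (((hG s hs).const_mul (G t)).congr_of_eventuallyEq hprod)

theorem eq_div_mul_of_mul_add (hG : ∀ t > 0, HasDerivAt G (G' t) t)
    (hmul : ∀ t > 0, ∀ s > 0, G (t + s) = G t * G s) (h1 : G 1 ≠ 0) {t : ℝ} (ht : 0 < t) :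
    G' t = G' 1 / G 1 * G t := by
  have h := hasDerivAt_add_eq_mul_of_mul_add hG hmul ht one_pos
  rw [add_comm, hasDerivAt_add_eq_mul_of_mul_add hG hmul one_pos ht] at h
  field_simp
  linarith

theorem eq_mul_exp_of_hasDerivAt_eq_mul {k : ℝ} (hG : ∀ t > 0, HasDerivAt G (k * G t) t)
    {t : ℝ} (ht : 0 < t) : G t = G 1 * exp (k * (t - 1)) := by
  set H : ℝ → ℝ := fun u => G u * exp (-(k * u))
  have hH : ∀ u > 0, HasDerivAt H 0 u := by
    intro u hu
    have hexp : HasDerivAt (fun y => exp (-(k * y))) (exp (-(k * u)) * -k) u := by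
      simpa using ((hasDerivAt_id u).const_mul k).neg.exp
    exact ((hG u hu).mul hexp).congr_deriv (by ring)
  have hconst : H t = H 1 :=
    isOpen_Ioi.is_const_of_deriv_eq_zero isPreconnected_Ioi
      (fun u hu => (hH u hu).differentiableAt.differentiableWithinAt)
      (fun u hu => (hH u hu).deriv) ht (mem_Ioi.mpr one_pos)
  have hexp : exp (k * (t - 1)) = exp (-(k * 1)) * exp (k * t) := by
    rw [← exp_add]; ring_nf
  simp only [H] at hconst
  rw [hexp, ← mul_assoc, ← hconst, mul_assoc, ← exp_add]
  simp

theorem exists_eq_exp_of_mul_add (hG : ∀ t > 0, HasDerivAt G (G' t) t)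
    (hmul : ∀ t > 0, ∀ s > 0, G (t + s) = G t * G s) (h1 : G 1 ≠ 0) :
    ∃ k : ℝ, ∀ t > 0, G' t = k * G t ∧ G t = exp (k * t) := by
  set k := G' 1 / G 1
  have hG' : ∀ t > 0, G' t = k * G t := fun t ht => eq_div_mul_of_mul_add hG hmul h1 ht
  have hexp : ∀ t > 0, G t = G 1 * exp (k * (t - 1)) :=
    fun t ht => eq_mul_exp_of_hasDerivAt_eq_mul (fun u hu => hG' u hu ▸ hG u hu) ht
  have hG1 : G 1 = exp k := by
    have h2 := hmul 1 one_pos 1 one_pos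
    rw [hexp (1 + 1) (by norm_num)] at h2
    norm_num at h2
    exact h2.resolve_right h1 |>.symm
  refine ⟨k, fun t ht => ⟨hG' t ht, ?_⟩⟩
  rw [hexp t ht, hG1, ← exp_add]
  ring_nf

end ExponentialEquation

section IntegralIdentity

variable {R : ℝ → ℝ}

theorem intervalIntegrable_of_integrableOn_Ioc (hR : ∀ T > 0, IntegrableOn R (Ioc 0 T))
    {a b : ℝ} (ha : 0 ≤ a) (hb : 0 ≤ b) : IntervalIntegrable R volume a b := by
  have hzero : ∀ b : ℝ, 0 ≤ b → IntervalIntegrable R volume 0 b := by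
    intro b hb
    rcases hb.eq_or_lt with rfl | hb
    · exact IntervalIntegrable.refl
    · exact (intervalIntegrable_iff_integrableOn_Ioc_of_le hb.le).mpr (hR b hb)
  exact (hzero a ha).symm.trans (hzero b hb)

theorem one_sub_integral_add_eq_mul (hR : ∀ T > 0, IntegrableOn R (Ioc 0 T))
    (hfun : ∀ t T : ℝ, 0 < t → t < T →
      (∫ s in (T - t)..T, R s) = (∫ s in (0:ℝ)..t, R s) * (1 - ∫ s in (0:ℝ)..(T - t), R s))
    {t s : ℝ} (ht : 0 < t) (hs : 0 < s) :
    1 - ∫ u in (0:ℝ)..(t + s), R u = (1 - ∫ u in (0:ℝ)..t, R u) * (1 - ∫ u in (0:ℝ)..s, R u) := by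
  have htail := hfun t (t + s) ht (lt_add_of_pos_right t hs)
  rw [add_sub_cancel_left] at htail
  rw [← integral_add_adjacent_intervals
    (intervalIntegrable_of_integrableOn_Ioc hR le_rfl hs.le)
    (intervalIntegrable_of_integrableOn_Ioc hR hs.le (add_pos ht hs).le), htail]
  ring

theorem integral_nonpos_of_forall_pos_nonpos (hR : ∀ t > 0, R t ≤ 0) {t : ℝ} (ht : 0 ≤ t) :
    ∫ u in (0:ℝ)..t, R u ≤ 0 := by
  rw [integral_of_le ht]
  exact setIntegral_nonpos measurableSet_Ioc fun u hu => hR u hu.1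

end IntegralIdentity

/-- Functional-equation lemma from the theorem on the driftless geometric
Volterra process: a continuous, locally integrable, nonpositive `R` satisfying
the quadratic integral identity equals `c e^{-ct}` with `c = lim_{t→0⁺} R(t) ≤ 0`. -/
theorem stmt_6 (R : ℝ → ℝ)
    (hRc : ContinuousOn R (Set.Ioi 0))
    (hRint : ∀ T > 0, MeasureTheory.IntegrableOn R (Set.Ioc 0 T))
    (hRnp : ∀ t > 0, R t ≤ 0)
    (hfun : ∀ t T : ℝ, 0 < t → t < T →
      (∫ s in (T - t)..T, R s)
        = (∫ s in (0:ℝ)..t, R s) * (1 - ∫ s in (0:ℝ)..(T - t), R s)) :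
    ∃ c : ℝ, Filter.Tendsto R (nhdsWithin 0 (Set.Ioi 0)) (nhds c) ∧ c ≤ 0 ∧
      ∀ t > 0, R t = c * Real.exp (-c * t) := by
  set G : ℝ → ℝ := fun t => 1 - ∫ u in (0:ℝ)..t, R u
  have hG : ∀ t > 0, HasDerivAt G (-R t) t := fun t ht =>
    (integral_hasDerivAt_right (intervalIntegrable_of_integrableOn_Ioc hRint le_rfl ht.le)
      (hRc.stronglyMeasurableAtFilter isOpen_Ioi t ht)
      (hRc.continuousAt (isOpen_Ioi.mem_nhds ht))).const_sub 1
  have hG1 : 0 < G 1 := by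
    linarith [integral_nonpos_of_forall_pos_nonpos hRnp zero_le_one]
  obtain ⟨k, hk⟩ := exists_eq_exp_of_mul_add hG
    (fun t ht s hs => one_sub_integral_add_eq_mul hRint hfun ht hs) hG1.ne'
  have hR : ∀ t > 0, R t = -k * exp (-(-k) * t) := fun t ht => by
    rw [neg_neg, ← (hk t ht).2]
    linarith [(hk t ht).1]
  refine ⟨-k, ?_, ?_, hR⟩
  · have hcont : Tendsto (fun t => -k * exp (-(-k) * t)) (nhdsWithin 0 (Ioi 0))
        (nhds (-k * exp (-(-k) * 0))) :=
      (Continuous.tendsto (by fun_prop) 0).mono_left nhdsWithin_le_nhds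
    rw [mul_zero, exp_zero, mul_one] at hcont
    exact hcont.congr' (eventually_nhdsWithin_of_forall fun t ht => (hR t ht).symm)
  · have hR1 := hR 1 one_pos ▸ hRnp 1 one_pos
    exact nonpos_of_mul_nonpos_left hR1 (exp_pos _)
end

section
/- Deterministic core of Theorem 2.3: Let λ ∈ ℝ, σ₀ ≠ 0, and let K : (0,∞) → ℝ be continuous and locally square-integrable. Let R : (0,∞) → ℝ be continuous and locally integrable, satisfying the resolvent equation R(t) + ∫₀ᵗ (−σ₀² K(t−s)²) R(s) ds = −σ₀² K(t)² for all t > 0, and suppose that the function R_λ(s) := e^{2λs} R(s) satisfies ∫_{T−t}^{T} R_λ(s) ds = (∫₀ᵗ R_λ(s) ds)(1 − ∫₀^{T−t} R_λ(s) ds) for all 0 < t < T. Then there exists c ∈ ℝ such that K(t) = c e^{−λt} for all t > 0. -/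
/-!
Put `ρ(s) = e^{2λs} R(s)` and `G(x) = 1 - ∫₀ˣ ρ`. The quadratic identity says exactly that
`G(a + b) = G(a) G(b)`; differentiating in `b` gives `G' = -μ G` for a constant `μ`, so
`G(t) = e^{-μt}` and `ρ(t) = μ e^{-μt}`. Multiplying the resolvent equation by `e^{2λt}` turns it
into the renewal equation `g = ρ + g ⋆ ρ` for `g(t) = -σ₀² e^{2λt} K(t)²`, and for an exponential
`ρ` its only solution is the constant `μ`. Hence `e^{2λt} K(t)²` is constant, and since `K` is
continuous on the connected set `(0, ∞)` it cannot switch between the two square roots.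
-/

open MeasureTheory Set Filter intervalIntegral Real

section Primitive

variable {u : ℝ → ℝ}

lemma intervalIntegrable_of_forall_integrableOn_Ioc (hu : ∀ T > 0, IntegrableOn u (Ioc 0 T))
    {a b : ℝ} (ha : 0 ≤ a) (hb : 0 ≤ b) : IntervalIntegrable u volume a b :=
  intervalIntegrable_iff.2 <| (hu (max a b + 1) (by positivity)).mono_set fun _ hx =>
    ⟨(le_min ha hb).trans_lt hx.1, hx.2.trans (by linarith)⟩

lemma integrableOn_Ioc_continuous_mul (hu : ∀ T > 0, IntegrableOn u (Ioc 0 T)) {v : ℝ → ℝ}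
    (hv : Continuous v) : ∀ T > 0, IntegrableOn (fun s => v s * u s) (Ioc 0 T) := fun T hT =>
  (hu T hT).continuousOn_mul_of_subset hv.continuousOn isCompact_Icc measurableSet_Ioc
    Ioc_subset_Icc_self

lemma continuousOn_primitive_Ici (hu : ∀ T > 0, IntegrableOn u (Ioc 0 T)) :
    ContinuousOn (fun x => ∫ s in (0 : ℝ)..x, u s) (Ici 0) := fun t ht => by
  have ht' : (0 : ℝ) ≤ t + 1 := by linarith [mem_Ici.1 ht]
  refine (continuousOn_primitive_interval' (intervalIntegrable_of_forall_integrableOn_Ioc hu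
    le_rfl ht') left_mem_uIcc t ?_).mono_of_mem_nhdsWithin ?_
  · rw [uIcc_of_le ht']; exact ⟨ht, by linarith⟩
  · rw [uIcc_of_le ht', ← Ici_inter_Iic]
    exact inter_mem_nhdsWithin _ (Iic_mem_nhds (by linarith))

lemma hasDerivAt_primitive (hu : ∀ T > 0, IntegrableOn u (Ioc 0 T))
    (hc : ContinuousOn u (Ioi 0)) {t : ℝ} (ht : 0 < t) :
    HasDerivAt (fun x => ∫ s in (0 : ℝ)..x, u s) (u t) t :=
  integral_hasDerivAt_right (intervalIntegrable_of_forall_integrableOn_Ioc hu le_rfl ht.le)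
    (hc.stronglyMeasurableAtFilter isOpen_Ioi t ht) (hc.continuousAt (isOpen_Ioi.mem_nhds ht))

end Primitive

lemma eq_mul_exp_of_hasDerivAt_mul {φ : ℝ → ℝ} {a : ℝ} (hc : ContinuousOn φ (Ici 0))
    (hd : ∀ x > 0, HasDerivAt φ (a * φ x) x) {t : ℝ} (ht : 0 ≤ t) :
    φ t = φ 0 * exp (a * t) := by
  set ψ : ℝ → ℝ := fun y => exp (-a * y) * φ y
  have hψ : ψ t = ψ 0 := by
    rcases ht.eq_or_lt with rfl | ht
    · rfl
    have hψd : ∀ x ∈ Ioo 0 t, HasDerivAt ψ 0 x := fun x hx => by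
      have := ((hasDerivAt_id x).const_mul (-a)).exp.mul (hd x hx.1)
      exact this.congr_deriv (by ring)
    obtain ⟨c, -, hc⟩ := exists_hasDerivAt_eq_slope ψ (fun _ => 0) ht
      ((continuous_const.mul continuous_id).rexp.continuousOn.mul (hc.mono Icc_subset_Ici_self))
      hψd
    rw [eq_comm, div_eq_zero_iff, sub_eq_zero] at hc
    exact hc.resolve_right (sub_ne_zero.2 ht.ne')
  simp only [ψ, mul_zero, exp_zero, one_mul] at hψ
  rw [← hψ, ← mul_rotate, ← exp_add]
  simp

lemma exists_eq_const_mul_of_map_add_eq_mul {G g : ℝ → ℝ} (hc : ContinuousWithinAt G (Ioi 0) 0)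
    (h0 : G 0 = 1) (hmul : ∀ a b, 0 < a → 0 < b → G (a + b) = G a * G b)
    (hd : ∀ x > 0, HasDerivAt G (g x) x) : ∃ μ, ∀ t > 0, g t = μ * G t := by
  obtain ⟨t₀, hGt₀, ht₀⟩ : ∃ t₀, G t₀ ≠ 0 ∧ 0 < t₀ :=
    ((hc.eventually_ne (h0 ▸ one_ne_zero)).and self_mem_nhdsWithin).exists
  have hshift : ∀ a b, 0 < a → 0 < b → g (a + b) = G a * g b := fun a b ha hb => by
    have h1 : HasDerivAt (fun x => G (a + x)) (g (a + b)) b :=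
      (hd (a + b) (by linarith)).comp_const_add a b
    have h2 : HasDerivAt (fun x => G (a + x)) (G a * g b) b :=
      ((hd b hb).const_mul (G a)).congr_of_eventuallyEq
        ((eventually_gt_nhds hb).mono fun x hx => hmul a x ha hx)
    exact h1.unique h2
  refine ⟨g t₀ / G t₀, fun t ht => ?_⟩
  have h := hshift t t₀ ht ht₀
  rw [add_comm, hshift t₀ t ht₀ ht] at h
  field_simp
  linarith

lemma exists_eq_mul_exp_of_integral_eq_mul {ρ : ℝ → ℝ} (hρ : ∀ T > 0, IntegrableOn ρ (Ioc 0 T))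
    (hρc : ContinuousOn ρ (Ioi 0))
    (h : ∀ a b, 0 < a → 0 < b →
      ∫ s in a..a + b, ρ s = (∫ s in (0 : ℝ)..b, ρ s) * (1 - ∫ s in (0 : ℝ)..a, ρ s)) :
    ∃ μ, ∀ t > 0, ρ t = μ * exp (-μ * t) := by
  set G : ℝ → ℝ := fun x => 1 - ∫ s in (0 : ℝ)..x, ρ s
  have hGc : ContinuousOn G (Ici 0) := continuousOn_const.sub (continuousOn_primitive_Ici hρ)
  have hG0 : G 0 = 1 := by simp [G]
  have hGd : ∀ x > 0, HasDerivAt G (-ρ x) x := fun x hx =>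
    (hasDerivAt_primitive hρ hρc hx).const_sub 1
  have hmul : ∀ a b, 0 < a → 0 < b → G (a + b) = G a * G b := fun a b ha hb => by
    have hadd := integral_add_adjacent_intervals
      (intervalIntegrable_of_forall_integrableOn_Ioc hρ le_rfl ha.le)
      (intervalIntegrable_of_forall_integrableOn_Ioc hρ ha.le (by linarith : 0 ≤ a + b))
    simp only [G, ← hadd, h a b ha hb]
    ring
  obtain ⟨μ, hμ⟩ := exists_eq_const_mul_of_map_add_eq_mul
    ((hGc 0 self_mem_Ici).mono Ioi_subset_Ici_self) hG0 hmul hGd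
  refine ⟨-μ, fun t ht => ?_⟩
  have hG := eq_mul_exp_of_hasDerivAt_mul hGc (fun x hx => hμ x hx ▸ hGd x hx) ht.le
  rw [hG0, one_mul] at hG
  rw [neg_neg, ← hG]
  linarith [hμ t ht]

lemma integral_comp_sub_mul_mul_exp (g : ℝ → ℝ) (μ t : ℝ) :
    ∫ s in (0 : ℝ)..t, g (t - s) * (μ * exp (-μ * s)) =
      μ * exp (-μ * t) * ∫ s in (0 : ℝ)..t, exp (μ * s) * g s := by
  have hflip := integral_comp_sub_left (a := 0) (b := t)
    (fun x => g x * (μ * exp (-μ * (t - x)))) t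
  simp only [sub_sub_cancel, sub_self, sub_zero] at hflip
  rw [hflip, ← intervalIntegral.integral_const_mul]
  refine integral_congr fun s _ => ?_
  have hexp : exp (-μ * (t - s)) = exp (-μ * t) * exp (μ * s) := by rw [← exp_add]; ring_nf
  simp only [hexp]
  ring

lemma eq_const_of_renewal_exp {g ρ : ℝ → ℝ} {μ : ℝ} (hg : ∀ T > 0, IntegrableOn g (Ioc 0 T))
    (hgc : ContinuousOn g (Ioi 0)) (hρ : ∀ t > 0, ρ t = μ * exp (-μ * t))
    (h : ∀ t > 0, g t = ρ t + ∫ s in (0 : ℝ)..t, g (t - s) * ρ s) : ∀ t > 0, g t = μ := by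
  set H : ℝ → ℝ := fun x => ∫ s in (0 : ℝ)..x, exp (μ * s) * g s
  have hint := integrableOn_Ioc_continuous_mul hg (v := fun s => exp (μ * s)) (by fun_prop)
  have hH : ∀ t > 0, exp (μ * t) * g t = μ * (1 + H t) := fun t ht => by
    have hconv : ∫ s in (0 : ℝ)..t, g (t - s) * ρ s =
        ∫ s in (0 : ℝ)..t, g (t - s) * (μ * exp (-μ * s)) :=
      integral_congr_ae (ae_of_all _ fun s hs => by
        rw [hρ s ((le_min le_rfl ht.le).trans_lt hs.1)])
    have hinv : exp (μ * t) * exp (-μ * t) = 1 := by rw [← exp_add]; simp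
    rw [h t ht, hconv, integral_comp_sub_mul_mul_exp, hρ t ht]
    linear_combination (1 + H t) * μ * hinv
  have hφ : ∀ t ≥ 0, 1 + H t = exp (μ * t) := fun t ht => by
    have hd : ∀ x > 0, HasDerivAt (fun y => 1 + H y) (μ * (1 + H x)) x := fun x hx =>
      hH x hx ▸ ((hasDerivAt_primitive hint
        ((by fun_prop : Continuous fun s => exp (μ * s)).continuousOn.mul hgc) hx).const_add 1)
    simpa [H] using eq_mul_exp_of_hasDerivAt_mul
      (continuousOn_const.add (continuousOn_primitive_Ici hint)) hd ht
  intro t ht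
  have hgt := hH t ht
  rw [hφ t ht.le] at hgt
  exact mul_left_cancel₀ (exp_ne_zero _) (hgt.trans (mul_comm _ _))

lemma exp_mul_add_integral_eq_of_resolvent {f R : ℝ → ℝ} {t : ℝ} (c : ℝ)
    (h : R t + ∫ s in (0 : ℝ)..t, f (t - s) * R s = f t) :
    exp (c * t) * R t + ∫ s in (0 : ℝ)..t, exp (c * (t - s)) * f (t - s) * (exp (c * s) * R s) =
      exp (c * t) * f t := by
  rw [← h, mul_add, ← intervalIntegral.integral_const_mul]
  congr 1
  refine integral_congr fun s _ => ?_
  have hexp : exp (c * (t - s)) * exp (c * s) = exp (c * t) := by rw [← exp_add]; ring_nf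
  linear_combination f (t - s) * R s * hexp

lemma exists_eq_mul_of_sq_eq_mul_sq {α : Type*} [TopologicalSpace α] {f w : α → ℝ} {s : Set α}
    {C : ℝ} (hs : IsPreconnected s) (hf : ContinuousOn f s) (hw : ContinuousOn w s)
    (hw0 : ∀ x ∈ s, w x ≠ 0) (h : ∀ x ∈ s, f x ^ 2 = C * w x ^ 2) :
    ∃ c, ∀ x ∈ s, f x = c * w x := by
  rcases le_or_gt C 0 with hC | hC
  · refine ⟨0, fun x hx => ?_⟩
    have hsq : f x ^ 2 ≤ 0 :=
      (h x hx).trans_le (mul_nonpos_of_nonpos_of_nonneg hC (sq_nonneg _))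
    rw [zero_mul, ← sq_eq_zero_iff]
    exact le_antisymm hsq (sq_nonneg _)
  · have hsq : EqOn (f ^ 2) ((fun x => √C * w x) ^ 2) s := fun x hx => by
      simp [mul_pow, Real.sq_sqrt hC.le, h x hx]
    rcases hs.eq_or_eq_neg_of_sq_eq hf (continuousOn_const.mul hw) hsq
      (fun hx => mul_ne_zero (Real.sqrt_pos.2 hC).ne' (hw0 _ hx)) with h' | h'
    · exact ⟨√C, h'⟩
    · exact ⟨-√C, fun x hx => by simpa [neg_mul] using h' hx⟩

/-- Deterministic core of Theorem 2.3 (driftless geometric Volterra process):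
if `R` is the resolvent of the second kind of `−σ₀² K²` and `e^{2λ·} R`
satisfies the quadratic integral identity forced by the Markov property,
then the kernel `K` is exponential. -/
theorem stmt_8 (lam σ0 : ℝ) (hσ0 : σ0 ≠ 0) (K R : ℝ → ℝ)
    (hKc : ContinuousOn K (Set.Ioi 0))
    (hKL2 : ∀ T > 0, MeasureTheory.IntegrableOn (fun s => (K s) ^ 2) (Set.Ioc 0 T))
    (hRc : ContinuousOn R (Set.Ioi 0))
    (hRint : ∀ T > 0, MeasureTheory.IntegrableOn R (Set.Ioc 0 T))
    (hres : ∀ t > 0,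
      R t + (∫ s in (0:ℝ)..t, (-(σ0 ^ 2) * (K (t - s)) ^ 2) * R s)
        = -(σ0 ^ 2) * (K t) ^ 2)
    (hfun : ∀ t T : ℝ, 0 < t → t < T →
      (∫ s in (T - t)..T, Real.exp (2 * lam * s) * R s)
        = (∫ s in (0:ℝ)..t, Real.exp (2 * lam * s) * R s) *
            (1 - ∫ s in (0:ℝ)..(T - t), Real.exp (2 * lam * s) * R s)) :
    ∃ c : ℝ, ∀ t > 0, K t = c * Real.exp (-lam * t) := by
  have hexp : Continuous fun s : ℝ => exp (2 * lam * s) := by fun_prop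
  obtain ⟨μ, hρ⟩ := exists_eq_mul_exp_of_integral_eq_mul
    (integrableOn_Ioc_continuous_mul hRint hexp) (hexp.continuousOn.mul hRc) fun a b ha hb => by
      have hab := hfun b (a + b) hb (by linarith)
      rwa [add_sub_cancel_right] at hab
  have hg := eq_const_of_renewal_exp
    (integrableOn_Ioc_continuous_mul (fun T hT => (hKL2 T hT).const_mul (-(σ0 ^ 2))) hexp)
    (hexp.continuousOn.mul (continuousOn_const.mul (hKc.pow 2))) hρ
    fun t ht => (exp_mul_add_integral_eq_of_resolvent (f := fun s => -(σ0 ^ 2) * K s ^ 2)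
      (2 * lam) (hres t ht)).symm
  refine exists_eq_mul_of_sq_eq_mul_sq isPreconnected_Ioi hKc (by fun_prop)
    (fun _ _ => (exp_pos _).ne') (C := -μ / σ0 ^ 2) fun t ht => ?_
  have hinv : exp (2 * lam * t) * exp (-lam * t) ^ 2 = 1 := by
    rw [sq, ← exp_add, ← exp_add]; ring_nf; exact exp_zero
  rw [div_mul_eq_mul_div, eq_div_iff (pow_ne_zero 2 hσ0)]
  linear_combination -exp (-lam * t) ^ 2 * hg t ht - σ0 ^ 2 * K t ^ 2 * hinv
end

section
/- Fix H > 0 and define c_H(a,b) := ∫₀^{min(a,b)} (a−u)^{H−1/2} (b−u)^{H−1/2} du for a, b > 0. Then for all integers 1 ≤ i < j, as τ ↘ 0 one has c_H(τ^i, τ^j) ∼ τ^{(i+j)H + (j−i)/2} / (H + 1/2), and for every integer k ≥ 1 one has the exact identity c_H(τ^k, τ^k) = τ^{2kH}/(2H). -/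
open MeasureTheory Set Filter intervalIntegral

/-- Covariance function of the Riemann–Liouville process
`Y_t = ∫₀ᵗ (t−s)^{H−1/2} dB_s`. -/
noncomputable def cH (H a b : ℝ) : ℝ :=
  ∫ u in (0:ℝ)..(min a b), (a - u) ^ (H - 1/2) * (b - u) ^ (H - 1/2)

/-!
On the diagonal the integrand is `(a - u)^{2H-1}`, which integrates exactly. Off the diagonal,
for `0 < b < a`, the factor `(a - u)^{H-1/2}` stays between `(a - b)^{H-1/2}` and `a^{H-1/2}` on
`[0, b]`, so `c_H(a, b) / (a^{H-1/2} b^{H+1/2} / (H + 1/2))` is squeezed between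
`(1 - b/a)^{H-1/2}` and `1`; both tend to `1` when `b / a → 0`, which is the case for
`a = τ^i`, `b = τ^j` with `i < j`.
-/

lemma integral_sub_rpow_self {a q : ℝ} (hq : -1 < q) :
    ∫ u in (0:ℝ)..a, (a - u) ^ q = a ^ (q + 1) / (q + 1) := by
  rw [integral_comp_sub_left (fun x => x ^ q), sub_self, sub_zero, integral_rpow (Or.inl hq),
    Real.zero_rpow (by linarith), sub_zero]

lemma intervalIntegrable_sub_rpow (a : ℝ) {q : ℝ} (hq : -1 < q) :
    IntervalIntegrable (fun u => (a - u) ^ q) volume 0 a := by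
  simpa using ((intervalIntegrable_rpow' (a := 0) (b := a) hq).comp_sub_left a).symm

lemma cH_self {H a : ℝ} (hH : 0 < H) (ha : 0 ≤ a) : cH H a a = a ^ (2 * H) / (2 * H) := by
  have hsq : ∀ u ∈ uIcc (0:ℝ) a,
      (a - u) ^ (H - 1/2) * (a - u) ^ (H - 1/2) = (a - u) ^ (2 * H - 1) := by
    intro u hu
    rw [uIcc_of_le ha] at hu
    rw [← sq, ← Real.rpow_natCast, ← Real.rpow_mul (by linarith [hu.2])]
    ring_nf
  rw [cH, min_self, integral_congr hsq, integral_sub_rpow_self (by linarith)]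
  ring_nf

lemma rpow_mem_uIcc_of_le {x y z : ℝ} (p : ℝ) (hx : 0 < x) (hxy : x ≤ y) (hyz : y ≤ z) :
    y ^ p ∈ uIcc (x ^ p) (z ^ p) := by
  rcases le_or_gt 0 p with hp | hp
  · exact Icc_subset_uIcc ⟨Real.rpow_le_rpow hx.le hxy hp,
      Real.rpow_le_rpow (hx.le.trans hxy) hyz hp⟩
  · exact Icc_subset_uIcc' ⟨Real.rpow_le_rpow_of_nonpos (hx.trans_le hxy) hyz hp.le,
      Real.rpow_le_rpow_of_nonpos hx hxy hp.le⟩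

lemma cH_mem_uIcc {H a b : ℝ} (hH : -1/2 < H) (hb : 0 < b) (hba : b < a) :
    cH H a b ∈ uIcc ((a - b) ^ (H - 1/2) * (b ^ (H + 1/2) / (H + 1/2)))
      (a ^ (H - 1/2) * (b ^ (H + 1/2) / (H + 1/2))) := by
  have hq : -1 < H - 1/2 := by linarith
  have hkernel : ∫ u in (0:ℝ)..b, (b - u) ^ (H - 1/2) = b ^ (H + 1/2) / (H + 1/2) := by
    rw [integral_sub_rpow_self hq]
    ring_nf
  have hint : IntervalIntegrable (fun u => (b - u) ^ (H - 1/2)) volume 0 b :=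
    intervalIntegrable_sub_rpow b hq
  have hfactor : ∀ u ∈ Icc 0 b,
      (a - u) ^ (H - 1/2) ∈ uIcc ((a - b) ^ (H - 1/2)) (a ^ (H - 1/2)) :=
    fun u hu => rpow_mem_uIcc_of_le _ (by linarith) (by linarith [hu.2]) (by linarith [hu.1])
  have hcont : ContinuousOn (fun u => (a - u) ^ (H - 1/2)) (uIcc 0 b) := by
    refine (continuousOn_const.sub continuousOn_id).rpow_const fun u hu => Or.inl ?_
    rw [uIcc_of_le hb.le] at hu
    exact sub_ne_zero.mpr (hu.2.trans_lt hba).ne'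
  have hI : 0 ≤ ∫ u in (0:ℝ)..b, (b - u) ^ (H - 1/2) :=
    hkernel ▸ div_nonneg (Real.rpow_nonneg hb.le _) (by linarith)
  rw [cH, min_eq_right hba.le, ← hkernel, uIcc, ← min_mul_of_nonneg _ _ hI,
    ← max_mul_of_nonneg _ _ hI, ← intervalIntegral.integral_const_mul,
    ← intervalIntegral.integral_const_mul]
  have hprod := hint.continuousOn_mul hcont
  exact ⟨integral_mono_on hb.le (hint.const_mul _) hprod fun u hu =>
      mul_le_mul_of_nonneg_right (hfactor u hu).1 (Real.rpow_nonneg (by linarith [hu.2]) _),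
    integral_mono_on hb.le hprod (hint.const_mul _) fun u hu =>
      mul_le_mul_of_nonneg_right (hfactor u hu).2 (Real.rpow_nonneg (by linarith [hu.2]) _)⟩

lemma cH_div_mem_uIcc {H a b : ℝ} (hH : -1/2 < H) (hb : 0 < b) (hba : b < a) :
    cH H a b / (a ^ (H - 1/2) * (b ^ (H + 1/2) / (H + 1/2))) ∈
      uIcc ((1 - b / a) ^ (H - 1/2)) 1 := by
  have ha : 0 < a := hb.trans hba
  have hI : 0 < b ^ (H + 1/2) / (H + 1/2) :=
    div_pos (Real.rpow_pos_of_pos hb _) (by linarith)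
  have hD := mul_pos (Real.rpow_pos_of_pos ha (H - 1/2)) hI
  have h := mem_image_of_mem (· / (a ^ (H - 1/2) * (b ^ (H + 1/2) / (H + 1/2))))
    (cH_mem_uIcc hH hb hba)
  rw [image_div_const_uIcc, div_self hD.ne'] at h
  rwa [mul_div_mul_right _ _ hI.ne', ← Real.div_rpow (by linarith) ha.le, sub_div,
    div_self ha.ne'] at h

lemma tendsto_cH_div_of_tendsto_div_zero {ι : Type*} {l : Filter ι} {H : ℝ} (hH : -1/2 < H)
    {a b : ι → ℝ} (hab : ∀ᶠ t in l, 0 < b t ∧ b t < a t)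
    (hlim : Tendsto (fun t => b t / a t) l (nhds 0)) :
    Tendsto (fun t => cH H (a t) (b t) / (a t ^ (H - 1/2) * (b t ^ (H + 1/2) / (H + 1/2))))
      l (nhds 1) := by
  have hend : Tendsto (fun t => (1 - b t / a t) ^ (H - 1/2)) l (nhds 1) := by
    simpa using ((tendsto_const_nhds (x := (1:ℝ))).sub hlim).rpow_const
      (Or.inl (by norm_num : (1:ℝ) - 0 ≠ 0))
  have hmin := hend.min (tendsto_const_nhds (x := (1:ℝ)))
  have hmax := hend.max (tendsto_const_nhds (x := (1:ℝ)))
  rw [min_self] at hmin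
  rw [max_self] at hmax
  exact tendsto_of_tendsto_of_tendsto_of_le_of_le' hmin hmax
    (hab.mono fun t ht => (cH_div_mem_uIcc hH ht.1 ht.2).1)
    (hab.mono fun t ht => (cH_div_mem_uIcc hH ht.1 ht.2).2)

/-- Asymptotics of the covariances `θ_{ij}(τ) = c_H(τ^i, τ^j)` at the time
points `τ^i` as `τ ↘ 0`: for `1 ≤ i < j`,
`c_H(τ^i, τ^j) ∼ τ^{(i+j)H + (j−i)/2}/(H+1/2)`, and on the diagonal
`c_H(τ^k, τ^k) = τ^{2kH}/(2H)` exactly. -/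
theorem stmt_10 (H : ℝ) (hH : 0 < H) :
    (∀ i j : ℕ, 1 ≤ i → i < j →
      Filter.Tendsto (fun τ : ℝ => cH H (τ ^ i) (τ ^ j) /
          (τ ^ (((i : ℝ) + (j : ℝ)) * H + ((j : ℝ) - (i : ℝ)) / 2) / (H + 1/2)))
        (nhdsWithin 0 (Set.Ioi 0)) (nhds 1)) ∧
    (∀ k : ℕ, 1 ≤ k → ∀ τ : ℝ, 0 < τ →
      cH H (τ ^ k) (τ ^ k) = τ ^ (2 * (k : ℝ) * H) / (2 * H)) := by
  refine ⟨fun i j _ hij => ?_, fun k _ τ hτ => ?_⟩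
  · have hsmall : ∀ᶠ τ in nhdsWithin (0:ℝ) (Ioi 0), τ ∈ Ioo (0:ℝ) 1 :=
      Ioo_mem_nhdsGT zero_lt_one
    have hratio : Tendsto (fun τ : ℝ => τ ^ j / τ ^ i) (nhdsWithin 0 (Ioi 0)) (nhds 0) := by
      refine Tendsto.congr' (hsmall.mono fun τ hτ => pow_sub₀ τ hτ.1.ne' hij.le) ?_
      exact ((continuous_pow (j - i)).tendsto' 0 0 (zero_pow (Nat.sub_ne_zero_of_lt hij))).mono_left
        nhdsWithin_le_nhds
    refine (tendsto_cH_div_of_tendsto_div_zero (H := H) (by linarith) (hsmall.mono fun τ hτ =>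
      ⟨pow_pos hτ.1 j, pow_lt_pow_right_of_lt_one₀ hτ.1 hτ.2 hij⟩) hratio).congr' ?_
    filter_upwards [hsmall] with τ hτ
    rw [← Real.rpow_natCast τ i, ← Real.rpow_natCast τ j, ← Real.rpow_mul hτ.1.le,
      ← Real.rpow_mul hτ.1.le, mul_div_assoc', ← Real.rpow_add hτ.1]
    ring_nf
  · rw [cH_self hH (pow_nonneg hτ.le k), ← Real.rpow_natCast, ← Real.rpow_mul hτ.le]
    ring_nf
end

section
/- Let H > 0, C > 0, and let K : (0,∞) → ℝ be measurable, locally square-integrable, and satisfy K(u)/(C u^{H−1/2}) → 1 as u ↘ 0. Set λ(n) := (∫₀^{1/n} K(r)² dr)^{−1}. Then for all 0 < s ≤ t one has lim_{n→∞} λ(n) ∫₀^{s/n} K((t−s)/n + r) K(r) dr = 2H ∫₀^s (t−s+r)^{H−1/2} r^{H−1/2} dr. -/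
open MeasureTheory Set Filter intervalIntegral

private lemma aux_ratio {f : ℕ → ℝ}
    (h : ∀ δ : ℝ, 0 < δ → δ < 1 → ∀ᶠ n in atTop, (1-δ)^2 ≤ f n ∧ f n ≤ (1+δ)^2) :
    Tendsto f atTop (nhds 1) := by
  rw [Metric.tendsto_nhds]
  intro ε hε
  have hδ0 : 0 < min (ε/4) (1/2) := by positivity
  have hδ1 : min (ε/4) (1/2) < 1 := lt_of_le_of_lt (min_le_right _ _) (by norm_num)
  filter_upwards [h _ hδ0 hδ1] with n hn
  obtain ⟨h1, h2⟩ := hn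
  have hδε : min (ε/4) (1/2) ≤ ε/4 := min_le_left _ _
  have hδh : min (ε/4) (1/2) ≤ 1/2 := min_le_right _ _
  rw [Real.dist_eq, abs_lt]
  constructor <;> nlinarith [hδ0]

private lemma powInt {p : ℝ} (hp : -1 < p) (hp2 : -1 < 2*p) {a b : ℝ} (ha : 0 ≤ a) (hb : 0 < b) :
    IntegrableOn (fun r => (a + r) ^ p * r ^ p) (Ioc 0 b) := by
  have hg : IntegrableOn (fun r : ℝ => (a+b)^p * r^p + r^(2*p)) (Ioc 0 b) := by
    have h1 : IntervalIntegrable (fun r : ℝ => (a+b)^p * r^p + r^(2*p)) volume 0 b :=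
      ((intervalIntegrable_rpow' hp).const_mul _).add (intervalIntegrable_rpow' hp2)
    exact (intervalIntegrable_iff_integrableOn_Ioc_of_le hb.le).1 h1
  refine hg.integrable.mono' ?_ ?_
  · refine ContinuousOn.aestronglyMeasurable ?_ measurableSet_Ioc
    refine ContinuousOn.mul ?_ ?_
    · exact (continuousOn_const.add continuousOn_id).rpow_const
        (fun x hx => Or.inl (by have := hx.1; dsimp; linarith))
    · exact continuousOn_id.rpow_const (fun x hx => Or.inl (ne_of_gt hx.1))
  · rw [ae_restrict_iff' measurableSet_Ioc]
    refine ae_of_all _ fun r hr => ?_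
    obtain ⟨hr0, hrb⟩ := hr
    have har : 0 < a + r := by linarith
    have hnn : 0 ≤ (a + r) ^ p * r ^ p := by positivity
    rw [Real.norm_of_nonneg hnn]
    have hcase : (a + r) ^ p ≤ (a + b) ^ p + r ^ p := by
      rcases le_or_gt 0 p with hp0 | hp0
      · exact le_add_of_le_of_nonneg
          (Real.rpow_le_rpow har.le (by linarith) hp0) (Real.rpow_nonneg hr0.le _)
      · exact le_add_of_nonneg_of_le (Real.rpow_nonneg (by linarith) _)
          (Real.rpow_le_rpow_of_nonpos hr0 (by linarith) hp0.le)
    calc (a + r) ^ p * r ^ p ≤ ((a + b) ^ p + r ^ p) * r ^ p :=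
          mul_le_mul_of_nonneg_right hcase (Real.rpow_nonneg hr0.le _)
      _ = (a+b)^p * r^p + r^(2*p) := by
          rw [add_mul, ← Real.rpow_add hr0]; ring_nf

private lemma subst_lemma (p t s : ℝ) (hs : 0 < s) (hst : s ≤ t) (n : ℕ) (hn : 0 < n) :
    ∫ r in (0:ℝ)..(s/(n:ℝ)), ((t-s)/(n:ℝ) + r)^p * r^p
      = (n:ℝ) ^ (-(2*p+1)) * ∫ r in (0:ℝ)..s, (t-s+r)^p * r^p := by
  have hn' : (0:ℝ) < n := Nat.cast_pos.2 hn
  have hts : 0 ≤ t - s := by linarith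
  have key : EqOn (fun r : ℝ => ((t-s)/(n:ℝ) + r)^p * r^p)
      (fun r : ℝ => (n:ℝ)^(-(2*p)) * ((fun u => (t-s+u)^p * u^p) ((n:ℝ)*r)))
      (Set.uIcc (0:ℝ) (s/(n:ℝ))) := by
    intro r hr
    rw [Set.uIcc_of_le (by positivity)] at hr
    have hr0 : 0 ≤ r := hr.1
    simp only
    have h1 : t - s + (n:ℝ)*r = (n:ℝ) * ((t-s)/(n:ℝ) + r) := by field_simp
    rw [h1, Real.mul_rpow hn'.le (by positivity), Real.mul_rpow hn'.le hr0]
    have h2 : (n:ℝ)^(-(2*p)) * ((n:ℝ)^p * (n:ℝ)^p) = 1 := by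
      rw [← Real.rpow_add hn', ← Real.rpow_add hn']
      rw [show -(2*p) + (p + p) = 0 by ring, Real.rpow_zero]
    calc ((t-s)/(n:ℝ) + r)^p * r^p
        = ((n:ℝ)^(-(2*p)) * ((n:ℝ)^p * (n:ℝ)^p)) * (((t-s)/(n:ℝ) + r)^p * r^p) := by
          rw [h2, one_mul]
      _ = (n:ℝ)^(-(2*p)) * ((n:ℝ)^p * ((t-s)/(n:ℝ) + r)^p * ((n:ℝ)^p * r^p)) := by ring
  rw [intervalIntegral.integral_congr key, intervalIntegral.integral_const_mul,
    intervalIntegral.integral_comp_mul_left (fun u => (t-s+u)^p * u^p) hn'.ne']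
  rw [mul_zero, mul_div_cancel₀ _ hn'.ne', smul_eq_mul]
  rw [← mul_assoc]
  congr 1
  rw [← Real.rpow_neg_one (n:ℝ), ← Real.rpow_add hn']
  congr 1
  ring

/-- Limiting-kernel identification of Example 5.1: for a kernel `K` with
Riemann–Liouville-type small-time behavior `K(u) ∼ C u^{H−1/2}`, the rescaled
covariance convolution converges, with normalization
`λ(n) = (∫₀^{1/n} K(r)² dr)⁻¹`, to the covariance associated with the
limiting kernel `K̄(t) = √(2H) t^{H−1/2}`. -/
theorem stmt_15 (H C : ℝ) (hH : 0 < H) (hC : 0 < C) (K : ℝ → ℝ)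
    (hmeas : Measurable K)
    (hL2 : ∀ T > 0, MeasureTheory.IntegrableOn (fun u => (K u) ^ 2) (Set.Ioc 0 T))
    (hasym : Filter.Tendsto (fun u : ℝ => K u / (C * u ^ (H - 1/2)))
      (nhdsWithin 0 (Set.Ioi 0)) (nhds 1)) :
    ∀ s t : ℝ, 0 < s → s ≤ t →
      Filter.Tendsto (fun n : ℕ =>
          (∫ r in (0:ℝ)..(1 / (n : ℝ)), (K r) ^ 2)⁻¹ *
            ∫ r in (0:ℝ)..(s / (n : ℝ)), K ((t - s) / (n : ℝ) + r) * K r)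
        Filter.atTop
        (nhds (2 * H * ∫ r in (0:ℝ)..s, (t - s + r) ^ (H - 1/2) * r ^ (H - 1/2))) := by
  intro s t hs hst
  have hts : 0 ≤ t - s := by linarith
  have hp1 : (-1:ℝ) < H - 1/2 := by linarith
  have hp2 : (-1:ℝ) < 2*(H - 1/2) := by linarith
  set I : ℝ := ∫ r in (0:ℝ)..s, (t - s + r) ^ (H - 1/2) * r ^ (H - 1/2) with hIdef
  have hIint : IntervalIntegrable (fun r => (t-s+r)^(H-1/2) * r^(H-1/2)) volume 0 s := by
    rw [intervalIntegrable_iff_integrableOn_Ioc_of_le hs.le]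
    exact powInt hp1 hp2 hts hs
  have hI : 0 < I := by
    refine intervalIntegral.intervalIntegral_pos_of_pos_on hIint (fun x hx => ?_) hs
    have h1 : 0 < t - s + x := by have := hx.1; linarith
    exact mul_pos (Real.rpow_pos_of_pos h1 _) (Real.rpow_pos_of_pos hx.1 _)
  -- bounds on K near 0
  have hKbound : ∀ δ : ℝ, 0 < δ → ∃ u₀ > 0, ∀ u, 0 < u → u < u₀ →
      (1-δ) * (C * u ^ (H - 1/2)) ≤ K u ∧ K u ≤ (1+δ) * (C * u ^ (H - 1/2)) := by
    intro δ hδ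
    have h := Metric.tendsto_nhds.mp hasym δ hδ
    rw [eventually_nhdsWithin_iff, Metric.eventually_nhds_iff] at h
    obtain ⟨u₀, hu₀, h⟩ := h
    refine ⟨u₀, hu₀, fun u hu hlt => ?_⟩
    have hd : dist u 0 < u₀ := by rw [Real.dist_eq, sub_zero, abs_of_pos hu]; exact hlt
    have h2 := h hd hu
    rw [Real.dist_eq, abs_lt] at h2
    have hcu : 0 < C * u ^ (H - 1/2) := mul_pos hC (Real.rpow_pos_of_pos hu _)
    constructor
    · have h3 : 1 - δ < K u / (C * u ^ (H - 1/2)) := by linarith [h2.1]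
      exact le_of_lt ((lt_div_iff₀ hcu).mp h3)
    · have h3 : K u / (C * u ^ (H - 1/2)) < 1 + δ := by linarith [h2.2]
      exact le_of_lt ((div_lt_iff₀ hcu).mp h3)
  -- part A
  have hA : Tendsto (fun n : ℕ =>
      (∫ r in Ioc (0:ℝ) (1/(n:ℝ)), (K r)^2) * (2*H/C^2) * (n:ℝ)^(2*H)) atTop (nhds 1) := by
    apply aux_ratio
    intro δ hδ0 hδ1
    obtain ⟨u₀, hu₀, hKb⟩ := hKbound δ hδ0
    rw [eventually_atTop]
    refine ⟨⌈1/u₀⌉₊ + 1, fun n hn => ?_⟩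
    have hn1 : 1 ≤ n := by omega
    have hnR : (0:ℝ) < n := by exact_mod_cast hn1
    have hlt : 1/u₀ < (n:ℝ) := by
      calc 1/u₀ ≤ (⌈1/u₀⌉₊ : ℝ) := Nat.le_ceil _
        _ < (n:ℝ) := by exact_mod_cast hn
    have hb : (0:ℝ) < 1/(n:ℝ) := by positivity
    have hbu : 1/(n:ℝ) < u₀ := by
      rw [div_lt_iff₀ hnR]
      rw [div_lt_iff₀ hu₀] at hlt
      linarith
    have hlow : ∀ r ∈ Ioc (0:ℝ) (1/(n:ℝ)),
        ((1-δ)^2*C^2) * r^(2*H-1) ≤ (K r)^2 := by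
      intro r hr
      have hr0 := hr.1
      have hru : r < u₀ := lt_of_le_of_lt hr.2 hbu
      obtain ⟨hl, hu⟩ := hKb r hr0 hru
      have hsq : (r^(H-1/2))^2 = r^(2*H-1) := by
        rw [sq, ← Real.rpow_add hr0]; congr 1; ring
      have hnn : 0 ≤ (1-δ) * (C * r^(H-1/2)) := by
        have : 0 ≤ 1 - δ := by linarith
        positivity
      calc ((1-δ)^2*C^2) * r^(2*H-1) = ((1-δ)*(C*r^(H-1/2)))^2 := by
            rw [mul_pow, mul_pow, hsq]; ring
        _ ≤ (K r)^2 := pow_le_pow_left₀ hnn hl 2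
    have hupp : ∀ r ∈ Ioc (0:ℝ) (1/(n:ℝ)),
        (K r)^2 ≤ ((1+δ)^2*C^2) * r^(2*H-1) := by
      intro r hr
      have hr0 := hr.1
      have hru : r < u₀ := lt_of_le_of_lt hr.2 hbu
      obtain ⟨hl, hu⟩ := hKb r hr0 hru
      have hsq : (r^(H-1/2))^2 = r^(2*H-1) := by
        rw [sq, ← Real.rpow_add hr0]; congr 1; ring
      have hnn : 0 ≤ (1-δ) * (C * r^(H-1/2)) := by
        have : 0 ≤ 1 - δ := by linarith
        positivity
      calc (K r)^2 ≤ ((1+δ)*(C*r^(H-1/2)))^2 := pow_le_pow_left₀ (le_trans hnn hl) hu 2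
        _ = ((1+δ)^2*C^2) * r^(2*H-1) := by rw [mul_pow, mul_pow, hsq]; ring
    have hpow : IntegrableOn (fun r : ℝ => r^(2*H-1)) (Ioc 0 (1/(n:ℝ))) :=
      (intervalIntegrable_iff_integrableOn_Ioc_of_le hb.le).1
        (intervalIntegrable_rpow' (by linarith))
    have hKint := hL2 _ hb
    have hlowI := setIntegral_mono_on (hpow.const_mul _) hKint measurableSet_Ioc hlow
    have huppI := setIntegral_mono_on hKint (hpow.const_mul _) measurableSet_Ioc hupp
    have he : 2*H-1+1 = 2*H := by ring
    have hval : ∫ r in Ioc (0:ℝ) (1/(n:ℝ)), r^(2*H-1) = (1/(n:ℝ))^(2*H)/(2*H) := by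
      rw [← intervalIntegral.integral_of_le hb.le, integral_rpow (Or.inl (by linarith))]
      rw [he, Real.zero_rpow (by linarith : (2*H:ℝ) ≠ 0), sub_zero]
    rw [MeasureTheory.integral_const_mul, hval] at hlowI huppI
    have hx : (0:ℝ) < (n:ℝ)^(2*H) := Real.rpow_pos_of_pos hnR _
    have hinv : (1/(n:ℝ))^(2*H) = ((n:ℝ)^(2*H))⁻¹ := by
      rw [one_div, Real.inv_rpow hnR.le]
    rw [hinv] at hlowI huppI
    constructor
    · calc (1-δ)^2
          = ((1-δ)^2*C^2) * (((n:ℝ)^(2*H))⁻¹/(2*H)) * (2*H/C^2) * ((n:ℝ)^(2*H)) := by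
            field_simp
        _ ≤ (∫ r in Ioc (0:ℝ) (1/(n:ℝ)), (K r)^2) * (2*H/C^2) * (n:ℝ)^(2*H) := by
            gcongr
    · calc (∫ r in Ioc (0:ℝ) (1/(n:ℝ)), (K r)^2) * (2*H/C^2) * (n:ℝ)^(2*H)
          ≤ ((1+δ)^2*C^2) * (((n:ℝ)^(2*H))⁻¹/(2*H)) * (2*H/C^2) * ((n:ℝ)^(2*H)) := by
            gcongr
        _ = (1+δ)^2 := by field_simp
  -- part B
  have hB : Tendsto (fun n : ℕ =>
      (∫ r in Ioc (0:ℝ) (s/(n:ℝ)), K ((t-s)/(n:ℝ) + r) * K r) * (n:ℝ)^(2*H) / (C^2*I))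
      atTop (nhds 1) := by
    apply aux_ratio
    intro δ hδ0 hδ1
    obtain ⟨u₀, hu₀, hKb⟩ := hKbound δ hδ0
    rw [eventually_atTop]
    refine ⟨⌈t/u₀⌉₊ + 1, fun n hn => ?_⟩
    have hn1 : 1 ≤ n := by omega
    have hnR : (0:ℝ) < n := by exact_mod_cast hn1
    have hlt : t/u₀ < (n:ℝ) := by
      calc t/u₀ ≤ (⌈t/u₀⌉₊ : ℝ) := Nat.le_ceil _
        _ < (n:ℝ) := by exact_mod_cast hn
    have htn : t/(n:ℝ) < u₀ := by
      rw [div_lt_iff₀ hnR]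
      rw [div_lt_iff₀ hu₀] at hlt
      linarith
    have hb : (0:ℝ) < s/(n:ℝ) := by positivity
    have ha : (0:ℝ) ≤ (t-s)/(n:ℝ) := by positivity
    have hsum : (t-s)/(n:ℝ) + s/(n:ℝ) = t/(n:ℝ) := by ring
    have hlow : ∀ r ∈ Ioc (0:ℝ) (s/(n:ℝ)),
        ((1-δ)^2*C^2) * (((t-s)/(n:ℝ) + r)^(H-1/2) * r^(H-1/2))
          ≤ K ((t-s)/(n:ℝ) + r) * K r := by
      intro r hr
      have hr0 := hr.1
      have hru : r < u₀ := by
        have h1 : s/(n:ℝ) ≤ t/(n:ℝ) := by gcongr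
        linarith [hr.2]
      have har : 0 < (t-s)/(n:ℝ) + r := by linarith
      have haru : (t-s)/(n:ℝ) + r < u₀ := by linarith [hr.2]
      obtain ⟨hl1, hu1⟩ := hKb _ har haru
      obtain ⟨hl2, hu2⟩ := hKb r hr0 hru
      have hd0 : 0 ≤ 1 - δ := by linarith
      have hnn2 : 0 ≤ (1-δ) * (C * r^(H-1/2)) := by positivity
      have hnn1 : 0 ≤ (1-δ) * (C * ((t-s)/(n:ℝ) + r)^(H-1/2)) := by positivity
      calc ((1-δ)^2*C^2) * (((t-s)/(n:ℝ) + r)^(H-1/2) * r^(H-1/2))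
          = ((1-δ) * (C * ((t-s)/(n:ℝ) + r)^(H-1/2))) * ((1-δ) * (C * r^(H-1/2))) := by
            ring
        _ ≤ K ((t-s)/(n:ℝ) + r) * K r :=
            mul_le_mul hl1 hl2 hnn2 (le_trans hnn1 hl1)
    have hupp : ∀ r ∈ Ioc (0:ℝ) (s/(n:ℝ)),
        K ((t-s)/(n:ℝ) + r) * K r
          ≤ ((1+δ)^2*C^2) * (((t-s)/(n:ℝ) + r)^(H-1/2) * r^(H-1/2)) := by
      intro r hr
      have hr0 := hr.1
      have hru : r < u₀ := by
        have h1 : s/(n:ℝ) ≤ t/(n:ℝ) := by gcongr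
        linarith [hr.2]
      have har : 0 < (t-s)/(n:ℝ) + r := by linarith
      have haru : (t-s)/(n:ℝ) + r < u₀ := by linarith [hr.2]
      obtain ⟨hl1, hu1⟩ := hKb _ har haru
      obtain ⟨hl2, hu2⟩ := hKb r hr0 hru
      have hd0 : 0 ≤ 1 - δ := by linarith
      have hnn2 : 0 ≤ (1-δ) * (C * r^(H-1/2)) := by positivity
      have hKr : 0 ≤ K r := le_trans hnn2 hl2
      have hnn1' : 0 ≤ (1+δ) * (C * ((t-s)/(n:ℝ) + r)^(H-1/2)) := by positivity
      calc K ((t-s)/(n:ℝ) + r) * K r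
          ≤ ((1+δ) * (C * ((t-s)/(n:ℝ) + r)^(H-1/2))) * ((1+δ) * (C * r^(H-1/2))) :=
            mul_le_mul hu1 hu2 hKr hnn1'
        _ = ((1+δ)^2*C^2) * (((t-s)/(n:ℝ) + r)^(H-1/2) * r^(H-1/2)) := by ring
    have hpow := powInt hp1 hp2 ha hb
    have hcross : IntegrableOn (fun r => K ((t-s)/(n:ℝ) + r) * K r) (Ioc 0 (s/(n:ℝ))) := by
      refine (hpow.const_mul ((1+δ)^2*C^2)).mono' ?_ ?_
      · exact ((hmeas.comp (measurable_id.const_add _)).mul hmeas).aestronglyMeasurable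
      · rw [ae_restrict_iff' measurableSet_Ioc]
        refine ae_of_all _ fun r hr => ?_
        have h1 := hlow r hr
        have h2 := hupp r hr
        have hd0 : 0 ≤ 1 - δ := by linarith
        have har : 0 < (t-s)/(n:ℝ) + r := by have := hr.1; linarith
        have h0 : 0 ≤ ((1-δ)^2*C^2) * (((t-s)/(n:ℝ) + r)^(H-1/2) * r^(H-1/2)) := by
          have hr0 := hr.1
          positivity
        rw [Real.norm_of_nonneg (le_trans h0 h1)]
        exact h2
    have hlowI := setIntegral_mono_on (hpow.const_mul _) hcross measurableSet_Ioc hlow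
    have huppI := setIntegral_mono_on hcross (hpow.const_mul _) measurableSet_Ioc hupp
    have hval : ∫ r in Ioc (0:ℝ) (s/(n:ℝ)), ((t-s)/(n:ℝ) + r)^(H-1/2) * r^(H-1/2)
        = ((n:ℝ)^(2*H))⁻¹ * I := by
      rw [← intervalIntegral.integral_of_le hb.le, subst_lemma (H-1/2) t s hs hst n hn1]
      rw [show -(2*(H-1/2)+1) = -(2*H) by ring, Real.rpow_neg hnR.le]
    rw [MeasureTheory.integral_const_mul, hval] at hlowI huppI
    have hx : (0:ℝ) < (n:ℝ)^(2*H) := Real.rpow_pos_of_pos hnR _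
    constructor
    · calc (1-δ)^2
          = ((1-δ)^2*C^2) * (((n:ℝ)^(2*H))⁻¹ * I) * ((n:ℝ)^(2*H)) / (C^2*I) := by
            field_simp
        _ ≤ (∫ r in Ioc (0:ℝ) (s/(n:ℝ)), K ((t-s)/(n:ℝ) + r) * K r) * (n:ℝ)^(2*H) / (C^2*I) := by
            gcongr
    · calc (∫ r in Ioc (0:ℝ) (s/(n:ℝ)), K ((t-s)/(n:ℝ) + r) * K r) * (n:ℝ)^(2*H) / (C^2*I)
          ≤ ((1+δ)^2*C^2) * (((n:ℝ)^(2*H))⁻¹ * I) * ((n:ℝ)^(2*H)) / (C^2*I) := by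
            gcongr
        _ = (1+δ)^2 := by field_simp
  -- assembly
  have hcomb := (hB.div hA one_ne_zero).mul_const (2*H*I)
  rw [show (1:ℝ)/1*(2*H*I) = 2*H*I from by norm_num] at hcomb
  refine Tendsto.congr' ?_ hcomb
  rw [eventuallyEq_iff_exists_mem]
  refine ⟨{n | 1 ≤ n}, mem_atTop 1, fun n hn => ?_⟩
  have hn1 : 1 ≤ n := hn
  have hnR : (0:ℝ) < n := by exact_mod_cast hn1
  have hx : (0:ℝ) < (n:ℝ)^(2*H) := Real.rpow_pos_of_pos hnR _
  simp only [Pi.div_apply]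
  rw [intervalIntegral.integral_of_le (by positivity : (0:ℝ) ≤ 1/(n:ℝ)),
      intervalIntegral.integral_of_le (by positivity : (0:ℝ) ≤ s/(n:ℝ))]
  set A' := ∫ r in Ioc (0:ℝ) (1/(n:ℝ)), (K r)^2 with hA'
  set B' := ∫ r in Ioc (0:ℝ) (s/(n:ℝ)), K ((t-s)/(n:ℝ) + r) * K r with hB'
  rcases eq_or_ne A' 0 with h0 | h0
  · rw [h0]
    simp
  · field_simp
end
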